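/- arXiv:0911.3524 — 8 statements merged into one kernel-verified Lean document; each statement's English description precedes it below -/
import Mathlib

section
/- Let A be a symmetric cellular algebra with cellular basis C and dual basis D. For any λ ∈ Λ and S, T, P, Q ∈ M(λ), the product C^λ_{S,T} D^λ_{T,Q} equals C^λ_{S,P} D^λ_{P,Q}; that is, C^λ_{S,T} D^λ_{T,Q} is independent of the middle index. -/
/-!
Pairing with `C l V U` under `τ` reads off the `D l U V`-coordinate, so it suffices to show
`τ (b * (C l S T * D l T Q)) = r b l Q S` for every `b`. Axiom (C3) rewrites `b * C l S T` as
`∑ S', r b l S' S • C l S' T` modulo lower cells, which `τ (_ * D l T Q)` kills, and the duality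
picks out the summand `S' = Q`; neither side involves `T`.
-/

theorem Module.Basis.repr_apply_eq_of_biorthogonal {ι R V : Type*} [CommSemiring R]
    [AddCommMonoid V] [Module R V] [DecidableEq ι] (b : Module.Basis ι R V) (f : ι → V →ₗ[R] R)
    (hf : ∀ i j, f i (b j) = if j = i then 1 else 0) (x : V) (i : ι) :
    b.repr x i = f i x := by
  have hcoord : b.coord i = f i := b.ext fun j => by
    rw [hf, Module.Basis.coord_apply, Module.Basis.repr_self_apply]
  exact LinearMap.congr_fun hcoord x

namespace Cellular

variable {R A : Type*} [CommRing R] [Ring A] [Algebra R A]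
variable {Λ : Type*} [DecidableEq Λ]
variable {M : Λ → Type*} [∀ l, DecidableEq (M l)]

def IsDualCellBasis (τ : A →ₗ[R] R) (C D : ∀ l, M l → M l → A) : Prop :=
  ∀ l m (S T : M l) (U V : M m),
    τ (C l S T * D m U V) = if (⟨l, (S, T)⟩ : (l : Λ) × (M l × M l)) = ⟨m, (V, U)⟩ then 1 else 0

variable {τ : A →ₗ[R] R} {C D : ∀ l, M l → M l → A}

theorem IsDualCellBasis.apply_cell_mul_dual (hdual : IsDualCellBasis τ C D) (l : Λ)
    (S' T Q : M l) : τ (C l S' T * D l T Q) = if S' = Q then 1 else 0 := by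
  simp [hdual l l]

theorem IsDualCellBasis.repr_apply (hdual : IsDualCellBasis τ C D)
    (bD : Module.Basis ((l : Λ) × (M l × M l)) R A) (hbD : ∀ l S T, bD ⟨l, (S, T)⟩ = D l S T)
    (a : A) (m : Λ) (U V : M m) :
    bD.repr a ⟨m, (U, V)⟩ = τ (C m V U * a) := by
  refine bD.repr_apply_eq_of_biorthogonal
    (fun i => τ ∘ₗ LinearMap.mulLeft R (C i.1 i.2.2 i.2.1)) ?_ a ⟨m, (U, V)⟩
  rintro ⟨m, U, V⟩ ⟨n, X, Y⟩
  rw [LinearMap.comp_apply, LinearMap.mulLeft_apply, hbD, hdual]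
  refine if_congr ⟨fun h => ?_, fun h => ?_⟩ rfl rfl <;> cases h <;> rfl

variable [Preorder Λ]

variable (R) in
/-- The paper's `A^{<λ}`. -/
def spanBelow (C : ∀ l, M l → M l → A) (l : Λ) : Submodule R A :=
  Submodule.span R {x | ∃ m, ∃ U V : M m, m < l ∧ x = C m U V}

theorem IsDualCellBasis.apply_mul_dual_eq_zero (hdual : IsDualCellBasis τ C D) {l : Λ}
    (T Q : M l) {x : A} (hx : x ∈ spanBelow R C l) : τ (x * D l T Q) = 0 := by
  induction hx using Submodule.span_induction with
  | mem x hx =>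
    obtain ⟨m, U, V, hml, rfl⟩ := hx
    rw [hdual, if_neg fun h => hml.ne (congrArg Sigma.fst h)]
  | zero => simp
  | add x y _ _ hx hy => rw [add_mul, map_add, hx, hy, add_zero]
  | smul c x _ hx => rw [smul_mul_assoc, map_smul, hx, smul_zero]

theorem IsDualCellBasis.apply_mul_dual_eq_of_sub_mem (hdual : IsDualCellBasis τ C D) {l : Λ}
    (T Q : M l) {x y : A} (hxy : x - y ∈ spanBelow R C l) :
    τ (x * D l T Q) = τ (y * D l T Q) := by
  rw [← sub_eq_zero, ← map_sub, ← sub_mul, hdual.apply_mul_dual_eq_zero T Q hxy]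

theorem IsDualCellBasis.apply_mul_cell_mul_dual [∀ l, Fintype (M l)]
    (hdual : IsDualCellBasis τ C D) (r : A → ∀ l, M l → M l → R) {b : A} {l : Λ} {S T : M l}
    (hC3 : b * C l S T - ∑ S', r b l S' S • C l S' T ∈ spanBelow R C l) (Q : M l) :
    τ (b * (C l S T * D l T Q)) = r b l Q S := by
  rw [← mul_assoc, hdual.apply_mul_dual_eq_of_sub_mem T Q hC3, Finset.sum_mul, map_sum]
  simp [hdual.apply_cell_mul_dual]

end Cellular

theorem cellular_mul_dual_middle_independent_general
    {R A : Type*} [CommRing R] [Ring A] [Algebra R A]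
    {Λ : Type*} [PartialOrder Λ] [DecidableEq Λ]
    {M : Λ → Type*} [∀ l, Fintype (M l)] [∀ l, DecidableEq (M l)]
    (C D : ∀ l, M l → M l → A)
    (r : A → ∀ l, M l → M l → R)
    (hC3 : ∀ (a : A) l (S T : M l), a * C l S T - ∑ S', r a l S' S • C l S' T ∈
      Submodule.span R {x | ∃ m, ∃ U V : M m, m < l ∧ x = C m U V})
    (τ : A →ₗ[R] R)
    (bD : Module.Basis ((l : Λ) × (M l × M l)) R A)
    (hbD : ∀ l S T, bD ⟨l, (S, T)⟩ = D l S T)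
    (hdual : ∀ l m (S T : M l) (U V : M m),
      τ (C l S T * D m U V) =
        if (⟨l, (S, T)⟩ : (l : Λ) × (M l × M l)) = ⟨m, (V, U)⟩ then 1 else 0)
     :
    ∀ l (S T P Q : M l), C l S T * D l T Q = C l S P * D l P Q := by
  intro l S T P Q
  have hdual : Cellular.IsDualCellBasis τ C D := hdual
  refine bD.ext_elem fun ⟨m, U, V⟩ => ?_
  rw [hdual.repr_apply bD hbD, hdual.repr_apply bD hbD,
    hdual.apply_mul_cell_mul_dual r (hC3 _ l S T), hdual.apply_mul_cell_mul_dual r (hC3 _ l S P)]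

/-- Lemma 2.14(3): `C l S T * D l T Q` is independent of the middle index `T`. -/
theorem cellular_mul_dual_middle_independent
    {R A : Type*} [CommRing R] [Ring A] [Algebra R A]
    {Λ : Type*} [PartialOrder Λ] [Fintype Λ] [DecidableEq Λ]
    {M : Λ → Type*} [∀ l, Fintype (M l)] [∀ l, DecidableEq (M l)]
    (C D : ∀ l, M l → M l → A)
    (bC : Module.Basis ((l : Λ) × (M l × M l)) R A)
    (hbC : ∀ l S T, bC ⟨l, (S, T)⟩ = C l S T)
    (ι : A →ₗ[R] A)
    (hι2 : ∀ x, ι (ι x) = x)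
    (hιmul : ∀ x y, ι (x * y) = ι y * ι x)
    (hC2 : ∀ l (S T : M l), ι (C l S T) - C l T S ∈
      Submodule.span R {x | ∃ m, ∃ U V : M m, m < l ∧ x = C m U V})
    (r : A → ∀ l, M l → M l → R)
    (hC3 : ∀ (a : A) l (S T : M l), a * C l S T - ∑ S', r a l S' S • C l S' T ∈
      Submodule.span R {x | ∃ m, ∃ U V : M m, m < l ∧ x = C m U V})
    (τ : A →ₗ[R] R)
    (hτtr : ∀ x y, τ (x * y) = τ (y * x))
    (bD : Module.Basis ((l : Λ) × (M l × M l)) R A)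
    (hbD : ∀ l S T, bD ⟨l, (S, T)⟩ = D l S T)
    (hdual : ∀ l m (S T : M l) (U V : M m),
      τ (C l S T * D m U V) =
        if (⟨l, (S, T)⟩ : (l : Λ) × (M l × M l)) = ⟨m, (V, U)⟩ then 1 else 0)
     :
    ∀ l (S T P Q : M l), C l S T * D l T Q = C l S P * D l P Q :=
  cellular_mul_dual_middle_independent_general C D r hC3 τ bD hbD hdual
end

section
/- Let A be a symmetric cellular algebra with cellular basis C and dual basis D. For λ ∈ Λ and S, T, P, Q ∈ M(λ) with T ≠ P, one has C^λ_{S,T} D^λ_{P,Q} = 0. -/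
/-!
Pairing against the cellular basis reads off coordinates in the dual basis, so it suffices to show
`τ (a * C l S T * D l P Q) = 0` for every `a`. By the cellular multiplication rule, `a * C l S T`
is a combination of the `C l S' T` plus a term in the span of cellular basis elements of strictly
smaller shape; `τ` kills the product of the latter with `D l P Q` because the shapes differ, and of
the former because `T ≠ P`.
-/

open Submodule

theorem Module.Basis.repr_apply_eq_of_dual {R A ι : Type*} [CommSemiring R] [Semiring A]
    [Algebra R A] [DecidableEq ι] (b : Module.Basis ι R A) (c : ι → A) (τ : A →ₗ[R] R)
    (hdual : ∀ i j, τ (c i * b j) = if i = j then 1 else 0) (x : A) (i : ι) :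
    b.repr x i = τ (c i * x) := by
  have hcoord : b.coord i = τ ∘ₗ LinearMap.mulLeft R (c i) :=
    b.ext fun j => by simp [hdual, Finsupp.single_apply, eq_comm]
  exact LinearMap.congr_fun hcoord x

theorem LinearMap.map_mul_eq_zero_of_mem_span {R A : Type*} [CommSemiring R] [Semiring A]
    [Algebra R A] (f : A →ₗ[R] R) {s : Set A} (y : A) (hs : ∀ x ∈ s, f (x * y) = 0) {x : A}
    (hx : x ∈ span R s) : f (x * y) = 0 :=
  span_le (p := LinearMap.ker (f ∘ₗ LinearMap.mulRight R y)) |>.mpr hs hx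

theorem Sigma.mk_prod_mk_eq_swap_iff {Λ : Type*} {M : Λ → Type*} {l m : Λ} (S T : M l)
    (U V : M m) :
    (⟨l, (S, T)⟩ : (l : Λ) × (M l × M l)) = ⟨m, (V, U)⟩ ↔
      (⟨l, (T, S)⟩ : (l : Λ) × (M l × M l)) = ⟨m, (U, V)⟩ := by
  constructor <;> rintro ⟨⟩ <;> rfl

theorem cellular_mul_dual_vanish_general
    {R A : Type*} [CommRing R] [Ring A] [Algebra R A]
    {Λ : Type*} [PartialOrder Λ] [DecidableEq Λ]
    {M : Λ → Type*} [∀ l, Fintype (M l)] [∀ l, DecidableEq (M l)]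
    (C D : ∀ l, M l → M l → A)
    (r : A → ∀ l, M l → M l → R)
    (hC3 : ∀ (a : A) l (S T : M l), a * C l S T - ∑ S', r a l S' S • C l S' T ∈
      Submodule.span R {x | ∃ m, ∃ U V : M m, m < l ∧ x = C m U V})
    (τ : A →ₗ[R] R)
    (bD : Module.Basis ((l : Λ) × (M l × M l)) R A)
    (hbD : ∀ l S T, bD ⟨l, (S, T)⟩ = D l S T)
    (hdual : ∀ l m (S T : M l) (U V : M m),
      τ (C l S T * D m U V) =
        if (⟨l, (S, T)⟩ : (l : Λ) × (M l × M l)) = ⟨m, (V, U)⟩ then 1 else 0)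
     :
    ∀ l (S T P Q : M l), T ≠ P → C l S T * D l P Q = 0 := by
  intro l S T P Q hTP
  have hrepr := bD.repr_apply_eq_of_dual (fun i => C i.1 i.2.2 i.2.1) τ <| by
    rintro ⟨m, U, V⟩ ⟨n, X, Y⟩
    rw [hbD, hdual]
    exact if_congr (Sigma.mk_prod_mk_eq_swap_iff _ _ _ _) rfl rfl
  refine bD.ext_elem fun ⟨m, U, V⟩ => ?_
  rw [hrepr, map_zero, Finsupp.zero_apply, ← mul_assoc]
  obtain ⟨w, hw, hsplit⟩ : ∃ w ∈ span R {x | ∃ n, ∃ X Y : M n, n < l ∧ x = C n X Y},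
      C m V U * C l S T = w + ∑ S', r (C m V U) l S' S • C l S' T :=
    ⟨_, hC3 (C m V U) l S T, (sub_add_cancel _ _).symm⟩
  have hlower : τ (w * D l P Q) = 0 := by
    refine τ.map_mul_eq_zero_of_mem_span _ ?_ hw
    rintro _ ⟨n, X, Y, hn, rfl⟩
    rw [hdual, if_neg fun h => hn.ne (congrArg Sigma.fst h)]
  have hcell : ∀ S', τ (C l S' T * D l P Q) = 0 := fun S' => by
    simp [hdual, hTP]
  simp [hsplit, add_mul, Finset.sum_mul, hlower, hcell]

/-- Lemma 2.14(5): if `T ≠ P` then `C l S T * D l P Q = 0`. -/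
theorem cellular_mul_dual_vanish
    {R A : Type*} [CommRing R] [Ring A] [Algebra R A]
    {Λ : Type*} [PartialOrder Λ] [Fintype Λ] [DecidableEq Λ]
    {M : Λ → Type*} [∀ l, Fintype (M l)] [∀ l, DecidableEq (M l)]
    (C D : ∀ l, M l → M l → A)
    (bC : Module.Basis ((l : Λ) × (M l × M l)) R A)
    (hbC : ∀ l S T, bC ⟨l, (S, T)⟩ = C l S T)
    (ι : A →ₗ[R] A)
    (hι2 : ∀ x, ι (ι x) = x)
    (hιmul : ∀ x y, ι (x * y) = ι y * ι x)
    (hC2 : ∀ l (S T : M l), ι (C l S T) - C l T S ∈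
      Submodule.span R {x | ∃ m, ∃ U V : M m, m < l ∧ x = C m U V})
    (r : A → ∀ l, M l → M l → R)
    (hC3 : ∀ (a : A) l (S T : M l), a * C l S T - ∑ S', r a l S' S • C l S' T ∈
      Submodule.span R {x | ∃ m, ∃ U V : M m, m < l ∧ x = C m U V})
    (τ : A →ₗ[R] R)
    (hτtr : ∀ x y, τ (x * y) = τ (y * x))
    (bD : Module.Basis ((l : Λ) × (M l × M l)) R A)
    (hbD : ∀ l S T, bD ⟨l, (S, T)⟩ = D l S T)
    (hdual : ∀ l m (S T : M l) (U V : M m),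
      τ (C l S T * D m U V) =
        if (⟨l, (S, T)⟩ : (l : Λ) × (M l × M l)) = ⟨m, (V, U)⟩ then 1 else 0)
     :
    ∀ l (S T P Q : M l), T ≠ P → C l S T * D l P Q = 0 :=
  cellular_mul_dual_vanish_general C D r hC3 τ bD hbD hdual
end

section
/- Let A be a symmetric cellular algebra with cellular basis C and dual basis D. For λ, μ ∈ Λ with μ not ≤ λ, and any S, T ∈ M(λ), U, V ∈ M(μ), one has C^λ_{S,T} D^μ_{U,V} = 0 and D^μ_{U,V} C^λ_{S,T} = 0. -/
/-!
The cellular axioms make `L(λ) = span {C^κ_{X,Y} | κ ≤ λ}` a two-sided ideal: it is a left ideal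
by the multiplication rule, and stable under the anti-involution `ι`, hence also a right ideal.
By duality, `τ (x * D^μ_{U,V}) = 0` for every `x ∈ L(λ)` when `μ ≰ λ`. A product `y` of
`C^λ_{S,T}` and `D^μ_{U,V}` (in either order) therefore satisfies `τ (C * y) = 0` for every basis
element `C`, after moving factors around with associativity and `τ (x * y) = τ (y * x)`; as the
functionals `τ (C^κ_{Q,P} * ·)` are the coordinate functionals of the basis `D`, this forces `y = 0`.
-/

open Submodule

theorem Module.Basis.eq_zero_of_forall_trace_mul_eq_zero
    {R A I : Type*} [CommRing R] [Ring A] [Algebra R A] [DecidableEq I]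
    (b : Module.Basis I R A) (c : I → A) (τ : A →ₗ[R] R)
    (hdual : ∀ i j, τ (c i * b j) = if i = j then 1 else 0)
    {x : A} (hx : ∀ i, τ (c i * x) = 0) : x = 0 := by
  have hcoord : ∀ i, τ.comp (LinearMap.mulLeft R (c i)) = b.coord i := fun i =>
    b.ext fun j => by simp [hdual, Finsupp.single_apply, eq_comm]
  refine b.repr.map_eq_zero_iff.mp (Finsupp.ext fun i => ?_)
  simpa using (LinearMap.congr_fun (hcoord i) x).symm.trans (hx i)

theorem Sigma.mk_prod_swap_inj_iff {Λ : Type*} {M : Λ → Type*} {l m : Λ} {S T : M l}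
    {U V : M m} :
    (⟨l, (T, S)⟩ : (l : Λ) × (M l × M l)) = ⟨m, (V, U)⟩ ↔
      (⟨l, (S, T)⟩ : (l : Λ) × (M l × M l)) = ⟨m, (U, V)⟩ := by
  constructor <;> rintro h <;> cases h <;> rfl

section CellSpan

variable (R : Type*) {A : Type*} [CommRing R] [Ring A] [Algebra R A]
  {Λ : Type*} [PartialOrder Λ] {M : Λ → Type*} (C : ∀ l, M l → M l → A)

def cellSpanBelow (l : Λ) : Submodule R A :=
  span R {x | ∃ m, ∃ U V : M m, m < l ∧ x = C m U V}

def cellSpanAtMost (l : Λ) : Submodule R A :=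
  span R {x | ∃ m, ∃ U V : M m, m ≤ l ∧ x = C m U V}

variable {R C}

theorem cell_mem_cellSpanAtMost {k l : Λ} (hkl : k ≤ l) (X Y : M k) :
    C k X Y ∈ cellSpanAtMost R C l :=
  subset_span ⟨k, X, Y, hkl, rfl⟩

theorem cellSpanBelow_le_cellSpanAtMost {k l : Λ} (hkl : k ≤ l) :
    cellSpanBelow R C k ≤ cellSpanAtMost R C l :=
  span_mono fun _ ⟨m, U, V, hmk, hx⟩ => ⟨m, U, V, hmk.le.trans hkl, hx⟩

theorem mem_cellSpanAtMost_of_sub_mem {k l : Λ} (hkl : k ≤ l) {x y : A}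
    (hxy : x - y ∈ cellSpanBelow R C k) (hy : y ∈ cellSpanAtMost R C l) :
    x ∈ cellSpanAtMost R C l := by
  simpa using add_mem (cellSpanBelow_le_cellSpanAtMost hkl hxy) hy

theorem mul_mem_cellSpanAtMost [∀ l, Fintype (M l)] (r : A → ∀ l, M l → M l → R)
    (hC3 : ∀ (a : A) l (S T : M l),
      a * C l S T - ∑ S', r a l S' S • C l S' T ∈ cellSpanBelow R C l)
    (a : A) {l : Λ} {x : A} (hx : x ∈ cellSpanAtMost R C l) :
    a * x ∈ cellSpanAtMost R C l := by
  suffices cellSpanAtMost R C l ≤ (cellSpanAtMost R C l).comap (LinearMap.mulLeft R a) from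
    this hx
  refine span_le.mpr ?_
  rintro _ ⟨k, X, Y, hkl, rfl⟩
  exact mem_cellSpanAtMost_of_sub_mem hkl (hC3 a k X Y)
    (sum_mem fun S' _ => smul_mem _ _ (cell_mem_cellSpanAtMost hkl S' Y))

theorem map_mem_cellSpanAtMost (ι : A →ₗ[R] A)
    (hC2 : ∀ l (S T : M l), ι (C l S T) - C l T S ∈ cellSpanBelow R C l)
    {l : Λ} {x : A} (hx : x ∈ cellSpanAtMost R C l) :
    ι x ∈ cellSpanAtMost R C l := by
  suffices cellSpanAtMost R C l ≤ (cellSpanAtMost R C l).comap ι from this hx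
  refine span_le.mpr ?_
  rintro _ ⟨k, X, Y, hkl, rfl⟩
  exact mem_cellSpanAtMost_of_sub_mem hkl (hC2 k X Y) (cell_mem_cellSpanAtMost hkl Y X)

theorem mem_cellSpanAtMost_mul [∀ l, Fintype (M l)] (ι : A →ₗ[R] A)
    (hι2 : ∀ x, ι (ι x) = x) (hιmul : ∀ x y, ι (x * y) = ι y * ι x)
    (hC2 : ∀ l (S T : M l), ι (C l S T) - C l T S ∈ cellSpanBelow R C l)
    (r : A → ∀ l, M l → M l → R)
    (hC3 : ∀ (a : A) l (S T : M l),
      a * C l S T - ∑ S', r a l S' S • C l S' T ∈ cellSpanBelow R C l)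
    {l : Λ} {x : A} (hx : x ∈ cellSpanAtMost R C l) (a : A) :
    x * a ∈ cellSpanAtMost R C l := by
  have h := map_mem_cellSpanAtMost ι hC2
    (mul_mem_cellSpanAtMost r hC3 (ι a) (map_mem_cellSpanAtMost ι hC2 hx))
  rwa [hιmul, hι2, hι2] at h

theorem trace_mul_dual_eq_zero_of_mem_cellSpanAtMost [DecidableEq Λ] [∀ l, DecidableEq (M l)]
    (D : ∀ l, M l → M l → A) (τ : A →ₗ[R] R)
    (hdual : ∀ l m (S T : M l) (U V : M m),
      τ (C l S T * D m U V) =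
        if (⟨l, (S, T)⟩ : (l : Λ) × (M l × M l)) = ⟨m, (V, U)⟩ then 1 else 0)
    {l m : Λ} (hml : ¬ m ≤ l) (U V : M m) {x : A} (hx : x ∈ cellSpanAtMost R C l) :
    τ (x * D m U V) = 0 := by
  suffices cellSpanAtMost R C l ≤ LinearMap.ker (τ ∘ₗ LinearMap.mulRight R (D m U V)) from
    this hx
  refine span_le.mpr ?_
  rintro _ ⟨k, X, Y, hkl, rfl⟩
  refine (hdual k m X Y U V).trans (if_neg fun h => hml ?_)
  cases h
  exact hkl

end CellSpan

theorem cellular_mul_dual_incomparable_vanish_general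
    {R A : Type*} [CommRing R] [Ring A] [Algebra R A]
    {Λ : Type*} [PartialOrder Λ] [DecidableEq Λ]
    {M : Λ → Type*} [∀ l, Fintype (M l)] [∀ l, DecidableEq (M l)]
    (C D : ∀ l, M l → M l → A)
    (ι : A →ₗ[R] A)
    (hι2 : ∀ x, ι (ι x) = x)
    (hιmul : ∀ x y, ι (x * y) = ι y * ι x)
    (hC2 : ∀ l (S T : M l), ι (C l S T) - C l T S ∈
      Submodule.span R {x | ∃ m, ∃ U V : M m, m < l ∧ x = C m U V})
    (r : A → ∀ l, M l → M l → R)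
    (hC3 : ∀ (a : A) l (S T : M l), a * C l S T - ∑ S', r a l S' S • C l S' T ∈
      Submodule.span R {x | ∃ m, ∃ U V : M m, m < l ∧ x = C m U V})
    (τ : A →ₗ[R] R)
    (hτtr : ∀ x y, τ (x * y) = τ (y * x))
    (bD : Module.Basis ((l : Λ) × (M l × M l)) R A)
    (hbD : ∀ l S T, bD ⟨l, (S, T)⟩ = D l S T)
    (hdual : ∀ l m (S T : M l) (U V : M m),
      τ (C l S T * D m U V) =
        if (⟨l, (S, T)⟩ : (l : Λ) × (M l × M l)) = ⟨m, (V, U)⟩ then 1 else 0)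
     :
    ∀ l m (S T : M l) (U V : M m), ¬ m ≤ l →
      C l S T * D m U V = 0 ∧ D m U V * C l S T = 0 := by
  intro l m S T U V hml
  have hzero : ∀ y : A, (∀ n (P Q : M n), τ (C n Q P * y) = 0) → y = 0 := fun y hy =>
    bD.eq_zero_of_forall_trace_mul_eq_zero (fun i => C i.1 i.2.2 i.2.1) τ
      (fun ⟨n, P, Q⟩ ⟨k, X, Y⟩ => by
        simp only [hbD, hdual, Sigma.mk_prod_swap_inj_iff])
      (fun ⟨n, P, Q⟩ => hy n P Q)
  have hCl : C l S T ∈ cellSpanAtMost R C l := cell_mem_cellSpanAtMost le_rfl S T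
  have hvanish : ∀ x ∈ cellSpanAtMost R C l, τ (x * D m U V) = 0 := fun _ hx =>
    trace_mul_dual_eq_zero_of_mem_cellSpanAtMost D τ hdual hml U V hx
  constructor
  · refine hzero _ fun n P Q => ?_
    rw [← mul_assoc]
    exact hvanish _ (mul_mem_cellSpanAtMost r hC3 _ hCl)
  · refine hzero _ fun n P Q => ?_
    rw [← mul_assoc, hτtr, ← mul_assoc]
    exact hvanish _ (mem_cellSpanAtMost_mul ι hι2 hιmul hC2 r hC3 hCl _)

/-- Lemma 2.14(7),(8): if `¬ m ≤ l` then `C l S T * D m U V = 0` and `D m U V * C l S T = 0`. -/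
theorem cellular_mul_dual_incomparable_vanish
    {R A : Type*} [CommRing R] [Ring A] [Algebra R A]
    {Λ : Type*} [PartialOrder Λ] [Fintype Λ] [DecidableEq Λ]
    {M : Λ → Type*} [∀ l, Fintype (M l)] [∀ l, DecidableEq (M l)]
    (C D : ∀ l, M l → M l → A)
    (bC : Module.Basis ((l : Λ) × (M l × M l)) R A)
    (hbC : ∀ l S T, bC ⟨l, (S, T)⟩ = C l S T)
    (ι : A →ₗ[R] A)
    (hι2 : ∀ x, ι (ι x) = x)
    (hιmul : ∀ x y, ι (x * y) = ι y * ι x)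
    (hC2 : ∀ l (S T : M l), ι (C l S T) - C l T S ∈
      Submodule.span R {x | ∃ m, ∃ U V : M m, m < l ∧ x = C m U V})
    (r : A → ∀ l, M l → M l → R)
    (hC3 : ∀ (a : A) l (S T : M l), a * C l S T - ∑ S', r a l S' S • C l S' T ∈
      Submodule.span R {x | ∃ m, ∃ U V : M m, m < l ∧ x = C m U V})
    (τ : A →ₗ[R] R)
    (hτtr : ∀ x y, τ (x * y) = τ (y * x))
    (bD : Module.Basis ((l : Λ) × (M l × M l)) R A)
    (hbD : ∀ l S T, bD ⟨l, (S, T)⟩ = D l S T)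
    (hdual : ∀ l m (S T : M l) (U V : M m),
      τ (C l S T * D m U V) =
        if (⟨l, (S, T)⟩ : (l : Λ) × (M l × M l)) = ⟨m, (V, U)⟩ then 1 else 0)
     :
    ∀ l m (S T : M l) (U V : M m), ¬ m ≤ l →
      C l S T * D m U V = 0 ∧ D m U V * C l S T = 0 :=
  cellular_mul_dual_incomparable_vanish_general C D ι hι2 hιmul hC2 r hC3 τ hτtr bD hbD hdual
end

section
/- Let A be a symmetric cellular algebra. For every λ ∈ Λ and S, T, U, V, P ∈ M(λ): C^λ_{S,T} D^λ_{T,U} C^λ_{U,V} D^λ_{V,P} = (Σ_{Y ∈ M(λ)} Φ(Y,V) Ψ(Y,V)) · C^λ_{S,T} D^λ_{T,P}, where Φ is the bilinear form from the cellular basis C and Ψ the bilinear form from the dual cellular basis D. -/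
/-!
Work modulo `A(<λ)`, the span of the `C^μ` with `μ < λ`; it is a two-sided ideal (a left ideal by
the cellular action, stable under the anti-involution) and, by the trace pairing, it annihilates
every `D^λ_{V,P}`. Hence left multiplication on a product `C^λ_{U,V} D^λ_{V,P}` is governed
exactly by the cellular coefficients `r`, and pairing with the dual basis identifies
`r(D^λ_{T,U})_{Y,U} = Ψ(Y,T)`. This gives
`C^λ_{S,T} D^λ_{T,U} C^λ_{U,V} D^λ_{V,P} = (∑_Y Φ(T,Y) Ψ(Y,T)) C^λ_{S,V} D^λ_{V,P}`.
The same pairing shows that `C^λ_{S,X} D^λ_{X,P}` does not depend on `X`; the trace property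
makes the scalar independent of `T`; and `Φ` is symmetric, by applying the anti-involution to
`C^λ_{T,X} C^λ_{Y,T}`.
-/

open Finset

section

variable {R A : Type*} [CommRing R] [Ring A] [Algebra R A] {Λ : Type*} {M : Λ → Type*}

variable (R) in
def cellSpan (C : ∀ l, M l → M l → A) (p : Λ → Prop) : Submodule R A :=
  Submodule.span R {x | ∃ m, ∃ U V : M m, p m ∧ x = C m U V}

variable {C D : ∀ l, M l → M l → A} {p : Λ → Prop} {l : Λ} {x y : A}

theorem cell_mem_cellSpan {m : Λ} (hm : p m) (U V : M m) : C m U V ∈ cellSpan R C p :=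
  Submodule.subset_span ⟨m, U, V, hm, rfl⟩

theorem cellSpan_le {N : Submodule R A} (h : ∀ m (U V : M m), p m → C m U V ∈ N) :
    cellSpan R C p ≤ N :=
  Submodule.span_le.mpr <| by rintro _ ⟨m, U, V, hm, rfl⟩; exact h m U V hm

def IsCellForm (C : ∀ l, M l → M l → A) (Φ : ∀ l, M l → M l → R) (rel : Λ → Λ → Prop) : Prop :=
  ∀ l (S T U V : M l), C l S T * C l U V - Φ l T U • C l S V ∈ cellSpan R C (rel l)

section TraceDual

variable [DecidableEq Λ] [∀ l, DecidableEq (M l)] {τ : A →ₗ[R] R}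

def IsTraceDual (τ : A →ₗ[R] R) (C D : ∀ l, M l → M l → A) : Prop :=
  ∀ l m (S T : M l) (U V : M m),
    τ (C l S T * D m U V) =
      if (⟨l, (S, T)⟩ : (l : Λ) × (M l × M l)) = ⟨m, (V, U)⟩ then 1 else 0

theorem IsTraceDual.apply_of_ne (hdual : IsTraceDual τ C D) {m : Λ} (h : l ≠ m)
    (S T : M l) (U V : M m) : τ (C l S T * D m U V) = 0 := by
  rw [hdual, if_neg fun he => h (congrArg Sigma.fst he)]

theorem IsTraceDual.apply_same (hdual : IsTraceDual τ C D) (S T U V : M l) :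
    τ (C l S T * D l U V) = if S = V ∧ T = U then 1 else 0 := by
  rw [hdual]
  exact if_congr (by simp) rfl rfl

theorem IsTraceDual.repr_apply (hdual : IsTraceDual τ C D)
    {bD : Module.Basis ((l : Λ) × (M l × M l)) R A} (hbD : ∀ l S T, bD ⟨l, (S, T)⟩ = D l S T)
    (x : A) (m : Λ) (S T : M m) : bD.repr x ⟨m, (S, T)⟩ = τ (C m T S * x) := by
  have : Finsupp.lapply ⟨m, (S, T)⟩ ∘ₗ bD.repr.toLinearMap =
      τ ∘ₗ LinearMap.mulLeft R (C m T S) := bD.ext fun ⟨k, (U, V)⟩ => by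
    simp only [LinearMap.comp_apply, LinearEquiv.coe_coe, Module.Basis.repr_self,
      Finsupp.lapply_apply, Finsupp.single_apply, LinearMap.mulLeft_apply]
    rw [hbD]
    by_cases hk : k = m
    · subst hk
      simp [hdual.apply_same, eq_comm, and_comm]
    · simp [hdual.apply_of_ne (Ne.symm hk), hk]
  exact LinearMap.congr_fun this x

theorem IsTraceDual.ext (hdual : IsTraceDual τ C D)
    {bD : Module.Basis ((l : Λ) × (M l × M l)) R A} (hbD : ∀ l S T, bD ⟨l, (S, T)⟩ = D l S T)
    (h : ∀ m (S T : M m), τ (C m S T * x) = τ (C m S T * y)) : x = y :=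
  bD.ext_elem fun ⟨m, (S, T)⟩ => by rw [hdual.repr_apply hbD, hdual.repr_apply hbD, h]

theorem IsTraceDual.trace_mul_dual_eq (hdual : IsTraceDual τ C D)
    (h : x ≡ y [SMOD cellSpan R C p]) (hl : ¬ p l) (X Y : M l) :
    τ (x * D l X Y) = τ (y * D l X Y) := by
  have hle : cellSpan R C p ≤ LinearMap.ker (τ ∘ₗ LinearMap.mulRight R (D l X Y)) :=
    cellSpan_le fun m U V hm => by
      simpa using hdual.apply_of_ne (fun (he : m = l) => hl (he ▸ hm)) U V X Y
  simpa [sub_mul, sub_eq_zero] using hle (SModEq.sub_mem.mp h)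

theorem IsTraceDual.trace_cell_mul_eq (hdual : IsTraceDual τ C D)
    (h : x ≡ y [SMOD cellSpan R D p]) (hl : ¬ p l) (X Y : M l) :
    τ (C l X Y * x) = τ (C l X Y * y) := by
  have hle : cellSpan R D p ≤ LinearMap.ker (τ ∘ₗ LinearMap.mulLeft R (C l X Y)) :=
    cellSpan_le fun m U V hm => by
      simpa using hdual.apply_of_ne (fun (he : l = m) => hl (he ▸ hm)) X Y U V
  simpa [mul_sub, sub_eq_zero] using hle (SModEq.sub_mem.mp h)

end TraceDual

variable [Preorder Λ]

theorem cellSpan_lt_mono {m : Λ} (h : m < l) : cellSpan R C (· < m) ≤ cellSpan R C (· < l) :=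
  cellSpan_le fun k U V (hk : k < m) => cell_mem_cellSpan (p := (· < l)) (hk.trans h) U V

variable {ι : A →ₗ[R] A}

theorem SModEq.map_cellSpan_lt (h : x ≡ y [SMOD cellSpan R C (· < l)])
    (hC2 : ∀ l (S T : M l), ι (C l S T) - C l T S ∈ cellSpan R C (· < l)) :
    ι x ≡ ι y [SMOD cellSpan R C (· < l)] := by
  have hle : cellSpan R C (· < l) ≤ (cellSpan R C (· < l)).comap ι :=
    cellSpan_le fun m U V (hm : m < l) => by
      simpa using
        add_mem (cellSpan_lt_mono hm (hC2 m U V)) (cell_mem_cellSpan (p := (· < l)) hm V U)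
  rw [SModEq.sub_mem, ← map_sub]
  exact hle (SModEq.sub_mem.mp h)

variable [∀ l, Fintype (M l)]

def IsCellLeftAction (C : ∀ l, M l → M l → A) (r : A → ∀ l, M l → M l → R) : Prop :=
  ∀ (a : A) l (S T : M l), a * C l S T - ∑ S', r a l S' S • C l S' T ∈ cellSpan R C (· < l)

variable {r : A → ∀ l, M l → M l → R}

theorem SModEq.mul_left_cellSpan_lt (h : x ≡ y [SMOD cellSpan R C (· < l)])
    (hC3 : IsCellLeftAction C r) (a : A) : a * x ≡ a * y [SMOD cellSpan R C (· < l)] := by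
  have hle : cellSpan R C (· < l) ≤ (cellSpan R C (· < l)).comap (LinearMap.mulLeft R a) :=
    cellSpan_le fun m U V (hm : m < l) => by
      have hsum : ∑ S', r a m S' U • C m S' V ∈ cellSpan R C (· < l) :=
        sum_mem fun S' _ => Submodule.smul_mem _ _ (cell_mem_cellSpan (p := (· < l)) hm S' V)
      simpa using add_mem (cellSpan_lt_mono hm (hC3 a m U V)) hsum
  rw [SModEq.sub_mem, ← mul_sub]
  exact hle (SModEq.sub_mem.mp h)

theorem SModEq.mul_right_cellSpan_lt (h : x ≡ y [SMOD cellSpan R C (· < l)])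
    (hι2 : ∀ x, ι (ι x) = x) (hιmul : ∀ x y, ι (x * y) = ι y * ι x)
    (hC2 : ∀ l (S T : M l), ι (C l S T) - C l T S ∈ cellSpan R C (· < l))
    (hC3 : IsCellLeftAction C r) (a : A) : x * a ≡ y * a [SMOD cellSpan R C (· < l)] := by
  simpa only [hιmul, hι2] using
    (((h.map_cellSpan_lt hC2).mul_left_cellSpan_lt hC3 (ι a)).map_cellSpan_lt hC2)

variable [DecidableEq Λ] [∀ l, DecidableEq (M l)] {τ : A →ₗ[R] R}
  {bD : Module.Basis ((l : Λ) × (M l × M l)) R A} {Φ Ψ : ∀ l, M l → M l → R}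

theorem IsTraceDual.trace_mul_cell_mul_dual (hdual : IsTraceDual τ C D)
    (hC3 : IsCellLeftAction C r) (a : A) (S V X : M l) :
    τ (a * C l S V * D l V X) = r a l X S := by
  rw [hdual.trace_mul_dual_eq (SModEq.sub_mem.mpr (hC3 a l S V)) (lt_irrefl l)]
  simp [sum_mul, hdual.apply_same]

theorem IsTraceDual.mul_dual_eq (hdual : IsTraceDual τ C D)
    (hbD : ∀ l S T, bD ⟨l, (S, T)⟩ = D l S T) (hC3 : IsCellLeftAction C r)
    (h : x ≡ y [SMOD cellSpan R C (· < l)]) (X Y : M l) : x * D l X Y = y * D l X Y :=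
  hdual.ext hbD fun m S T => by
    simpa only [mul_assoc] using
      hdual.trace_mul_dual_eq (h.mul_left_cellSpan_lt hC3 (C m S T)) (lt_irrefl l) X Y

theorem mul_cell_mul_dual (hdual : IsTraceDual τ C D)
    (hbD : ∀ l S T, bD ⟨l, (S, T)⟩ = D l S T) (hC3 : IsCellLeftAction C r)
    (a : A) (U V P : M l) :
    a * C l U V * D l V P = ∑ S', r a l S' U • (C l S' V * D l V P) := by
  rw [hdual.mul_dual_eq hbD hC3 (SModEq.sub_mem.mpr (hC3 a l U V)), sum_mul]
  simp only [smul_mul_assoc]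

theorem cell_mul_cell_mul_dual (hdual : IsTraceDual τ C D)
    (hbD : ∀ l S T, bD ⟨l, (S, T)⟩ = D l S T) (hC3 : IsCellLeftAction C r)
    (hΦ : IsCellForm C Φ (· > ·)) (S T U V P : M l) :
    C l S T * C l U V * D l V P = Φ l T U • (C l S V * D l V P) := by
  rw [hdual.mul_dual_eq hbD hC3 (SModEq.sub_mem.mpr (hΦ l S T U V)), smul_mul_assoc]

theorem left_action_coeff_dual_eq (hτtr : ∀ x y, τ (x * y) = τ (y * x))
    (hdual : IsTraceDual τ C D) (hC3 : IsCellLeftAction C r)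
    (hΨ : IsCellForm D Ψ (· < ·)) (F E X Y : M l) :
    r (D l F E) l X Y = Ψ l X F * if Y = E then 1 else 0 := calc
  r (D l F E) l X Y = τ (D l F E * C l Y Y * D l Y X) :=
    (hdual.trace_mul_cell_mul_dual hC3 _ Y Y X).symm
  _ = τ (C l Y Y * (D l Y X * D l F E)) := by rw [mul_assoc, hτtr, mul_assoc]
  _ = τ (C l Y Y * (Ψ l X F • D l Y E)) :=
    hdual.trace_cell_mul_eq (SModEq.sub_mem.mpr (hΨ l Y X F E)) (lt_irrefl l) Y Y
  _ = _ := by simp [hdual.apply_same]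

theorem cell_mul_dual_mul_cell_mul_dual (hτtr : ∀ x y, τ (x * y) = τ (y * x))
    (hdual : IsTraceDual τ C D) (hbD : ∀ l S T, bD ⟨l, (S, T)⟩ = D l S T)
    (hC3 : IsCellLeftAction C r)
    (hΦ : IsCellForm C Φ (· > ·)) (hΨ : IsCellForm D Ψ (· < ·)) (S T U V P : M l) :
    C l S T * D l T U * (C l U V * D l V P) =
      (∑ Y, Φ l T Y * Ψ l Y T) • (C l S V * D l V P) := calc
  _ = C l S T * (D l T U * C l U V * D l V P) := by simp only [mul_assoc]
  _ = ∑ Y, r (D l T U) l Y U • (C l S T * C l Y V * D l V P) := by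
    rw [mul_cell_mul_dual hdual hbD hC3, mul_sum]
    simp only [mul_smul_comm, mul_assoc]
  _ = ∑ Y, (Φ l T Y * Ψ l Y T) • (C l S V * D l V P) := sum_congr rfl fun Y _ => by
    rw [left_action_coeff_dual_eq hτtr hdual hC3 hΨ, cell_mul_cell_mul_dual hdual hbD hC3 hΦ,
      if_pos rfl, mul_one, smul_smul, mul_comm]
  _ = _ := (sum_smul ..).symm

theorem cell_mul_dual_eq_cell_mul_dual (hdual : IsTraceDual τ C D)
    (hbD : ∀ l S T, bD ⟨l, (S, T)⟩ = D l S T) (hC3 : IsCellLeftAction C r) (S P X Y : M l) :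
    C l S X * D l X P = C l S Y * D l Y P :=
  hdual.ext hbD fun m E F => by simp only [← mul_assoc, hdual.trace_mul_cell_mul_dual hC3]

theorem sum_cellForm_mul_dualForm_eq (hτtr : ∀ x y, τ (x * y) = τ (y * x))
    (hdual : IsTraceDual τ C D) (hbD : ∀ l S T, bD ⟨l, (S, T)⟩ = D l S T)
    (hC3 : IsCellLeftAction C r)
    (hΦ : IsCellForm C Φ (· > ·)) (hΨ : IsCellForm D Ψ (· < ·)) (T V : M l) :
    ∑ Y, Φ l T Y * Ψ l Y T = ∑ Y, Φ l V Y * Ψ l Y V := calc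
  _ = τ (C l V T * D l T V * (C l V V * D l V V)) := by
    simp [cell_mul_dual_mul_cell_mul_dual hτtr hdual hbD hC3 hΦ hΨ, hdual.apply_same]
  _ = τ (C l V V * D l V V * (C l V T * D l T V)) := hτtr _ _
  _ = _ := by simp [cell_mul_dual_mul_cell_mul_dual hτtr hdual hbD hC3 hΦ hΨ, hdual.apply_same]

theorem cellForm_symm (hι2 : ∀ x, ι (ι x) = x) (hιmul : ∀ x y, ι (x * y) = ι y * ι x)
    (hC2 : ∀ l (S T : M l), ι (C l S T) - C l T S ∈ cellSpan R C (· < l))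
    (hC3 : IsCellLeftAction C r) (hdual : IsTraceDual τ C D)
    (hΦ : IsCellForm C Φ (· > ·)) (X Y : M l) : Φ l X Y = Φ l Y X := by
  have hXX := SModEq.sub_mem.mpr (hC2 l X X)
  have key : Φ l X Y • C l X X ≡ Φ l Y X • C l X X [SMOD cellSpan R C (· < l)] := calc
    Φ l X Y • C l X X ≡ Φ l X Y • ι (C l X X) [SMOD cellSpan R C (· < l)] := hXX.symm.smul _
    _ = ι (Φ l X Y • C l X X) := (map_smul ..).symm
    _ ≡ ι (C l X X * C l Y X) [SMOD cellSpan R C (· < l)] :=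
      (SModEq.sub_mem.mpr (hΦ l X X Y X)).symm.map_cellSpan_lt hC2
    _ = ι (C l Y X) * ι (C l X X) := hιmul _ _
    _ ≡ C l X Y * ι (C l X X) [SMOD cellSpan R C (· < l)] :=
      (SModEq.sub_mem.mpr (hC2 l Y X)).mul_right_cellSpan_lt hι2 hιmul hC2 hC3 _
    _ ≡ C l X Y * C l X X [SMOD cellSpan R C (· < l)] := hXX.mul_left_cellSpan_lt hC3 _
    _ ≡ Φ l Y X • C l X X [SMOD cellSpan R C (· < l)] := SModEq.sub_mem.mpr (hΦ l X Y X X)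
  simpa [smul_mul_assoc, hdual.apply_same] using hdual.trace_mul_dual_eq key (lt_irrefl l) X X

end

theorem cellular_fourfold_product_general
    {R A : Type*} [CommRing R] [Ring A] [Algebra R A]
    {Λ : Type*} [PartialOrder Λ] [DecidableEq Λ]
    {M : Λ → Type*} [∀ l, Fintype (M l)] [∀ l, DecidableEq (M l)]
    (C D : ∀ l, M l → M l → A)
    (ι : A →ₗ[R] A)
    (hι2 : ∀ x, ι (ι x) = x)
    (hιmul : ∀ x y, ι (x * y) = ι y * ι x)
    (hC2 : ∀ l (S T : M l), ι (C l S T) - C l T S ∈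
      Submodule.span R {x | ∃ m, ∃ U V : M m, m < l ∧ x = C m U V})
    (r : A → ∀ l, M l → M l → R)
    (hC3 : ∀ (a : A) l (S T : M l), a * C l S T - ∑ S', r a l S' S • C l S' T ∈
      Submodule.span R {x | ∃ m, ∃ U V : M m, m < l ∧ x = C m U V})
    (τ : A →ₗ[R] R)
    (hτtr : ∀ x y, τ (x * y) = τ (y * x))
    (bD : Module.Basis ((l : Λ) × (M l × M l)) R A)
    (hbD : ∀ l S T, bD ⟨l, (S, T)⟩ = D l S T)
    (hdual : ∀ l m (S T : M l) (U V : M m),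
      τ (C l S T * D m U V) =
        if (⟨l, (S, T)⟩ : (l : Λ) × (M l × M l)) = ⟨m, (V, U)⟩ then 1 else 0)
    (Φ Ψ : ∀ l, M l → M l → R)
    (hΦ : ∀ l (S T U V : M l), C l S T * C l U V - Φ l T U • C l S V ∈
      Submodule.span R {x | ∃ m, ∃ U' V' : M m, m < l ∧ x = C m U' V'})
    (hΨ : ∀ l (S T U V : M l), D l S T * D l U V - Ψ l T U • D l S V ∈
      Submodule.span R {x | ∃ m, ∃ U' V' : M m, l < m ∧ x = D m U' V'})
     :
    ∀ l (S T U V P : M l),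
      C l S T * D l T U * (C l U V * D l V P) =
        (∑ Y : M l, Φ l Y V * Ψ l Y V) • (C l S T * D l T P) := by
  intro l S T U V P
  rw [cell_mul_dual_mul_cell_mul_dual hτtr hdual hbD hC3 hΦ hΨ,
    cell_mul_dual_eq_cell_mul_dual hdual hbD hC3 S P V T,
    sum_cellForm_mul_dualForm_eq hτtr hdual hbD hC3 hΦ hΨ T V]
  congr 1
  exact sum_congr rfl fun Y _ => by rw [cellForm_symm hι2 hιmul hC2 hC3 hdual hΦ V Y]

/-- Lemma 2.17: `C l S T * D l T U * C l U V * D l V P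
  = (∑ Y, Φ l Y V * Ψ l Y V) • (C l S T * D l T P)`. -/
theorem cellular_fourfold_product
    {R A : Type*} [CommRing R] [Ring A] [Algebra R A]
    {Λ : Type*} [PartialOrder Λ] [Fintype Λ] [DecidableEq Λ]
    {M : Λ → Type*} [∀ l, Fintype (M l)] [∀ l, DecidableEq (M l)]
    (C D : ∀ l, M l → M l → A)
    (bC : Module.Basis ((l : Λ) × (M l × M l)) R A)
    (hbC : ∀ l S T, bC ⟨l, (S, T)⟩ = C l S T)
    (ι : A →ₗ[R] A)
    (hι2 : ∀ x, ι (ι x) = x)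
    (hιmul : ∀ x y, ι (x * y) = ι y * ι x)
    (hC2 : ∀ l (S T : M l), ι (C l S T) - C l T S ∈
      Submodule.span R {x | ∃ m, ∃ U V : M m, m < l ∧ x = C m U V})
    (r : A → ∀ l, M l → M l → R)
    (hC3 : ∀ (a : A) l (S T : M l), a * C l S T - ∑ S', r a l S' S • C l S' T ∈
      Submodule.span R {x | ∃ m, ∃ U V : M m, m < l ∧ x = C m U V})
    (τ : A →ₗ[R] R)
    (hτtr : ∀ x y, τ (x * y) = τ (y * x))
    (bD : Module.Basis ((l : Λ) × (M l × M l)) R A)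
    (hbD : ∀ l S T, bD ⟨l, (S, T)⟩ = D l S T)
    (hdual : ∀ l m (S T : M l) (U V : M m),
      τ (C l S T * D m U V) =
        if (⟨l, (S, T)⟩ : (l : Λ) × (M l × M l)) = ⟨m, (V, U)⟩ then 1 else 0)
    (Φ Ψ : ∀ l, M l → M l → R)
    (hΦ : ∀ l (S T U V : M l), C l S T * C l U V - Φ l T U • C l S V ∈
      Submodule.span R {x | ∃ m, ∃ U' V' : M m, m < l ∧ x = C m U' V'})
    (hΨ : ∀ l (S T U V : M l), D l S T * D l U V - Ψ l T U • D l S V ∈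
      Submodule.span R {x | ∃ m, ∃ U' V' : M m, l < m ∧ x = D m U' V'})
     :
    ∀ l (S T U V P : M l),
      C l S T * D l T U * (C l U V * D l V P) =
        (∑ Y : M l, Φ l Y V * Ψ l Y V) • (C l S T * D l T P) :=
  cellular_fourfold_product_general C D ι hι2 hιmul hC2 r hC3 τ hτtr bD hbD hdual Φ Ψ hΦ hΨ
end

section
/- Let A be a symmetric cellular algebra. For each λ ∈ Λ, the quantity Σ_{X ∈ M(λ)} Φ(X,V) Ψ(X,V) is independent of the choice of V ∈ M(λ); this common value is denoted k_λ. -/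
/-!
Pairing with the dual basis reads off coefficients, since `τ (C l S T * D l U W)` is `1` exactly
when `(S, T) = (W, U)` and `τ` kills `A(<λ) * D l U W` and `C l S T * A_D(>λ)`. In this way the
matrix of left multiplication by `D l B S` on the cell module is found to be `Ψ l · B`, so
expanding first `D l B S * C l S T` and then `C l P B * C l X T` gives
`τ (C l P B * D l B S * C l S T * D l T P) = ∑ X, Φ l B X * Ψ l X B`. As `τ` is a trace, swapping
the halves `C l B B * D l B T` and `C l T T * D l T B` shows that this sum does not depend on `B`.
It remains to see that `Φ` is symmetric: `ι` reverses the product `C l T T * C l U U` and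
transposes cellular basis elements modulo the two-sided ideal `A(<λ)`.
-/

open Finset

namespace CellularAlgebra

variable {R A : Type*} [CommRing R] [Ring A] [Algebra R A] {Λ : Type*} {M : Λ → Type*}

def IsTraceDual [DecidableEq Λ] [∀ l, DecidableEq (M l)] (τ : A →ₗ[R] R)
    (C D : ∀ l, M l → M l → A) : Prop :=
  ∀ l m (S T : M l) (U V : M m),
    τ (C l S T * D m U V) = if (⟨l, (S, T)⟩ : (l : Λ) × (M l × M l)) = ⟨m, (V, U)⟩ then 1 else 0

lemma trace_C_mul_D [DecidableEq Λ] [∀ l, DecidableEq (M l)] {τ : A →ₗ[R] R}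
    {C D : ∀ l, M l → M l → A} (hdual : IsTraceDual τ C D) {l : Λ} (S T U W : M l) :
    τ (C l S T * D l U W) = if S = W ∧ T = U then 1 else 0 := by
  rw [hdual]
  simp

variable [PartialOrder Λ]

variable (R) in
/-- `A(<λ)`. -/
def spanBelow (C : ∀ l, M l → M l → A) (l : Λ) : Submodule R A :=
  Submodule.span R {x | ∃ m, ∃ U V : M m, m < l ∧ x = C m U V}

variable (R) in
/-- `A_D(>λ)`. -/
def spanAbove (D : ∀ l, M l → M l → A) (l : Λ) : Submodule R A :=
  Submodule.span R {x | ∃ m, ∃ U V : M m, l < m ∧ x = D m U V}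

/-- Axiom (C2) of a cellular algebra, for the anti-involution `ι`. -/
def IsCellTranspose (ι : A →ₗ[R] A) (C : ∀ l, M l → M l → A) : Prop :=
  ∀ l (S T : M l), ι (C l S T) - C l T S ∈ spanBelow R C l

/-- Axiom (C3) of a cellular algebra: `r a l` is the matrix of `a` acting on the cell module. -/
def IsCellAction [∀ l, Fintype (M l)] (r : A → ∀ l, M l → M l → R) (C : ∀ l, M l → M l → A) :
    Prop :=
  ∀ (a : A) l (S T : M l), a * C l S T - ∑ S', r a l S' S • C l S' T ∈ spanBelow R C l

section Ideal

variable {C : ∀ l, M l → M l → A} {l : Λ}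

lemma C_mem_spanBelow {m : Λ} (h : m < l) (U V : M m) : C m U V ∈ spanBelow R C l :=
  Submodule.subset_span ⟨m, U, V, h, rfl⟩

lemma spanBelow_mono {m : Λ} (h : m ≤ l) : spanBelow R C m ≤ spanBelow R C l :=
  Submodule.span_mono fun _ ⟨k, U, V, hk, hx⟩ => ⟨k, U, V, hk.trans_le h, hx⟩

lemma map_mem_spanBelow {ι : A →ₗ[R] A} (hC2 : IsCellTranspose ι C) {x : A}
    (hx : x ∈ spanBelow R C l) : ι x ∈ spanBelow R C l := by
  suffices spanBelow R C l ≤ (spanBelow R C l).comap ι from this hx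
  refine Submodule.span_le.mpr ?_
  rintro _ ⟨m, S, T, hm, rfl⟩
  simpa using add_mem (spanBelow_mono hm.le (hC2 m S T)) (C_mem_spanBelow hm T S)

lemma transpose_smodEq {ι : A →ₗ[R] A} (hC2 : IsCellTranspose ι C) (S T : M l) :
    ι (C l S T) ≡ C l T S [SMOD spanBelow R C l] :=
  SModEq.sub_mem.mpr (hC2 l S T)

lemma map_smodEq {ι : A →ₗ[R] A} (hC2 : IsCellTranspose ι C) {x y : A}
    (h : x ≡ y [SMOD spanBelow R C l]) : ι x ≡ ι y [SMOD spanBelow R C l] :=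
  SModEq.sub_mem.mpr (by rw [← map_sub]; exact map_mem_spanBelow hC2 (SModEq.sub_mem.mp h))

variable [∀ l, Fintype (M l)] {r : A → ∀ l, M l → M l → R}

lemma mul_mem_spanBelow_left (hC3 : IsCellAction r C) (a : A) {x : A}
    (hx : x ∈ spanBelow R C l) : a * x ∈ spanBelow R C l := by
  suffices spanBelow R C l ≤ (spanBelow R C l).comap (LinearMap.mulLeft R a) from this hx
  refine Submodule.span_le.mpr ?_
  rintro _ ⟨m, S, T, hm, rfl⟩
  have hsum : ∑ S', r a m S' S • C m S' T ∈ spanBelow R C l :=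
    sum_mem fun S' _ => Submodule.smul_mem _ _ (C_mem_spanBelow hm S' T)
  simpa using add_mem (spanBelow_mono hm.le (hC3 a m S T)) hsum

lemma mul_mem_spanBelow_right {ι : A →ₗ[R] A} (hι2 : ∀ x, ι (ι x) = x)
    (hιmul : ∀ x y, ι (x * y) = ι y * ι x) (hC2 : IsCellTranspose ι C) (hC3 : IsCellAction r C)
    {x : A} (hx : x ∈ spanBelow R C l) (a : A) : x * a ∈ spanBelow R C l := by
  rw [← hι2 (x * a), hιmul]
  exact map_mem_spanBelow hC2 (mul_mem_spanBelow_left hC3 _ (map_mem_spanBelow hC2 hx))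

lemma mul_smodEq_mul {ι : A →ₗ[R] A} (hι2 : ∀ x, ι (ι x) = x)
    (hιmul : ∀ x y, ι (x * y) = ι y * ι x) (hC2 : IsCellTranspose ι C) (hC3 : IsCellAction r C)
    {x₁ x₂ y₁ y₂ : A} (h₁ : x₁ ≡ y₁ [SMOD spanBelow R C l]) (h₂ : x₂ ≡ y₂ [SMOD spanBelow R C l]) :
    x₁ * x₂ ≡ y₁ * y₂ [SMOD spanBelow R C l] := by
  rw [SModEq.sub_mem] at *
  have h : x₁ * x₂ - y₁ * y₂ = (x₁ - y₁) * x₂ + y₁ * (x₂ - y₂) := by noncomm_ring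
  rw [h]
  exact add_mem (mul_mem_spanBelow_right hι2 hιmul hC2 hC3 h₁ _)
    (mul_mem_spanBelow_left hC3 _ h₂)

end Ideal

section Trace

variable [DecidableEq Λ] [∀ l, DecidableEq (M l)] {τ : A →ₗ[R] R} {C D : ∀ l, M l → M l → A}
  {l : Λ}

lemma trace_mul_D_eq_zero (hdual : IsTraceDual τ C D) {x : A} (hx : x ∈ spanBelow R C l)
    (U W : M l) : τ (x * D l U W) = 0 := by
  suffices spanBelow R C l ≤ LinearMap.ker (τ ∘ₗ LinearMap.mulRight R (D l U W)) from this hx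
  refine Submodule.span_le.mpr ?_
  rintro _ ⟨m, S, T, hm, rfl⟩
  change τ (C m S T * D l U W) = 0
  rw [hdual]
  simp [hm.ne]

lemma trace_C_mul_eq_zero (hdual : IsTraceDual τ C D) {y : A} (hy : y ∈ spanAbove R D l)
    (S T : M l) : τ (C l S T * y) = 0 := by
  suffices spanAbove R D l ≤ LinearMap.ker (τ ∘ₗ LinearMap.mulLeft R (C l S T)) from this hy
  refine Submodule.span_le.mpr ?_
  rintro _ ⟨m, U, V, hm, rfl⟩
  change τ (C l S T * D m U V) = 0
  rw [hdual]
  simp [hm.ne]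

lemma trace_mul_D_congr (hdual : IsTraceDual τ C D) {x y : A}
    (h : x ≡ y [SMOD spanBelow R C l]) (U W : M l) : τ (x * D l U W) = τ (y * D l U W) := by
  rw [← sub_eq_zero, ← map_sub, ← sub_mul]
  exact trace_mul_D_eq_zero hdual (SModEq.sub_mem.mp h) U W

lemma trace_C_mul_congr (hdual : IsTraceDual τ C D) {x y : A}
    (h : x ≡ y [SMOD spanAbove R D l]) (S T : M l) : τ (C l S T * x) = τ (C l S T * y) := by
  rw [← sub_eq_zero, ← map_sub, ← mul_sub]
  exact trace_C_mul_eq_zero hdual (SModEq.sub_mem.mp h) S T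

lemma trace_C_mul_C_mul_D (hdual : IsTraceDual τ C D) {Φ : ∀ l, M l → M l → R}
    (hΦ : ∀ l (S T U V : M l), C l S T * C l U V - Φ l T U • C l S V ∈ spanBelow R C l)
    (P B S T : M l) : τ (C l P B * C l S T * D l T P) = Φ l B S := by
  rw [trace_mul_D_congr hdual (SModEq.sub_mem.mpr (hΦ l P B S T))]
  simp [trace_C_mul_D hdual]

end Trace

section Gram

variable [DecidableEq Λ] [∀ l, DecidableEq (M l)] [∀ l, Fintype (M l)] {τ : A →ₗ[R] R}
  {C D : ∀ l, M l → M l → A} {r : A → ∀ l, M l → M l → R} {Φ Ψ : ∀ l, M l → M l → R} {l : Λ}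

lemma trace_mul_C_mul_D (hC3 : IsCellAction r C) (hdual : IsTraceDual τ C D) (a : A)
    (S T W : M l) : τ (a * C l S T * D l T W) = r a l W S := by
  rw [trace_mul_D_congr hdual (SModEq.sub_mem.mpr (hC3 a l S T))]
  simp [sum_mul, trace_C_mul_D hdual]

lemma r_D_eq_Ψ (hC3 : IsCellAction r C) (hdual : IsTraceDual τ C D)
    (hτ : ∀ x y, τ (x * y) = τ (y * x))
    (hΨ : ∀ l (S T U V : M l), D l S T * D l U V - Ψ l T U • D l S V ∈ spanAbove R D l)
    (B Q X : M l) : r (D l B Q) l X Q = Ψ l X B := by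
  rw [← trace_mul_C_mul_D hC3 hdual (D l B Q) Q B X, mul_assoc, hτ, mul_assoc,
    trace_C_mul_congr hdual (SModEq.sub_mem.mpr (hΨ l B X B Q))]
  simp [trace_C_mul_D hdual]

lemma trace_C_mul_D_mul_C_mul_D (hC3 : IsCellAction r C) (hdual : IsTraceDual τ C D)
    (hτ : ∀ x y, τ (x * y) = τ (y * x))
    (hΦ : ∀ l (S T U V : M l), C l S T * C l U V - Φ l T U • C l S V ∈ spanBelow R C l)
    (hΨ : ∀ l (S T U V : M l), D l S T * D l U V - Ψ l T U • D l S V ∈ spanAbove R D l)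
    (P B S T : M l) :
    τ (C l P B * D l B S * C l S T * D l T P) = ∑ X, Φ l B X * Ψ l X B := by
  have h : C l P B * D l B S * C l S T ≡
      C l P B * ∑ X, r (D l B S) l X S • C l X T [SMOD spanBelow R C l] := by
    rw [mul_assoc, SModEq.sub_mem, ← mul_sub]
    exact mul_mem_spanBelow_left hC3 _ (hC3 _ l S T)
  rw [trace_mul_D_congr hdual h, mul_sum, sum_mul, map_sum]
  refine sum_congr rfl fun X _ => ?_
  rw [mul_smul_comm, smul_mul_assoc, map_smul, trace_C_mul_C_mul_D hdual hΦ,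
    r_D_eq_Ψ hC3 hdual hτ hΨ, smul_eq_mul, mul_comm]

lemma sum_Φ_mul_Ψ_eq (hC3 : IsCellAction r C) (hdual : IsTraceDual τ C D)
    (hτ : ∀ x y, τ (x * y) = τ (y * x))
    (hΦ : ∀ l (S T U V : M l), C l S T * C l U V - Φ l T U • C l S V ∈ spanBelow R C l)
    (hΨ : ∀ l (S T U V : M l), D l S T * D l U V - Ψ l T U • D l S V ∈ spanAbove R D l)
    (B T : M l) : ∑ X, Φ l B X * Ψ l X B = ∑ X, Φ l T X * Ψ l X T := by
  rw [← trace_C_mul_D_mul_C_mul_D hC3 hdual hτ hΦ hΨ B B T T,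
    ← trace_C_mul_D_mul_C_mul_D hC3 hdual hτ hΦ hΨ T T B B, mul_assoc _ (C l T T), hτ,
    ← mul_assoc]

lemma Φ_symm {ι : A →ₗ[R] A} (hι2 : ∀ x, ι (ι x) = x) (hιmul : ∀ x y, ι (x * y) = ι y * ι x)
    (hC2 : IsCellTranspose ι C) (hC3 : IsCellAction r C) (hdual : IsTraceDual τ C D)
    (hΦ : ∀ l (S T U V : M l), C l S T * C l U V - Φ l T U • C l S V ∈ spanBelow R C l)
    (T U : M l) : Φ l T U = Φ l U T := by
  have h₁ : ι (C l T T * C l U U) ≡ Φ l U T • C l U T [SMOD spanBelow R C l] :=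
    calc ι (C l T T * C l U U) = ι (C l U U) * ι (C l T T) := hιmul _ _
      _ ≡ C l U U * C l T T [SMOD spanBelow R C l] :=
        mul_smodEq_mul hι2 hιmul hC2 hC3 (transpose_smodEq hC2 U U) (transpose_smodEq hC2 T T)
      _ ≡ Φ l U T • C l U T [SMOD spanBelow R C l] := SModEq.sub_mem.mpr (hΦ l U U T T)
  have h₂ : ι (C l T T * C l U U) ≡ Φ l T U • C l U T [SMOD spanBelow R C l] :=
    calc ι (C l T T * C l U U) ≡ ι (Φ l T U • C l T U) [SMOD spanBelow R C l] :=
        map_smodEq hC2 (SModEq.sub_mem.mpr (hΦ l T T U U))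
      _ = Φ l T U • ι (C l T U) := map_smul _ _ _
      _ ≡ Φ l T U • C l U T [SMOD spanBelow R C l] := (transpose_smodEq hC2 T U).smul _
  simpa [trace_C_mul_D hdual] using
    (trace_mul_D_congr hdual h₂ T U).symm.trans (trace_mul_D_congr hdual h₁ T U)

end Gram

end CellularAlgebra

open CellularAlgebra

theorem k_lambda_well_defined_general
    {R A : Type*} [CommRing R] [Ring A] [Algebra R A]
    {Λ : Type*} [PartialOrder Λ] [DecidableEq Λ]
    {M : Λ → Type*} [∀ l, Fintype (M l)] [∀ l, DecidableEq (M l)]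
    (C D : ∀ l, M l → M l → A)
    (ι : A →ₗ[R] A)
    (hι2 : ∀ x, ι (ι x) = x)
    (hιmul : ∀ x y, ι (x * y) = ι y * ι x)
    (hC2 : ∀ l (S T : M l), ι (C l S T) - C l T S ∈
      Submodule.span R {x | ∃ m, ∃ U V : M m, m < l ∧ x = C m U V})
    (r : A → ∀ l, M l → M l → R)
    (hC3 : ∀ (a : A) l (S T : M l), a * C l S T - ∑ S', r a l S' S • C l S' T ∈
      Submodule.span R {x | ∃ m, ∃ U V : M m, m < l ∧ x = C m U V})
    (τ : A →ₗ[R] R)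
    (hτtr : ∀ x y, τ (x * y) = τ (y * x))
    (hdual : ∀ l m (S T : M l) (U V : M m),
      τ (C l S T * D m U V) =
        if (⟨l, (S, T)⟩ : (l : Λ) × (M l × M l)) = ⟨m, (V, U)⟩ then 1 else 0)
    (Φ Ψ : ∀ l, M l → M l → R)
    (hΦ : ∀ l (S T U V : M l), C l S T * C l U V - Φ l T U • C l S V ∈
      Submodule.span R {x | ∃ m, ∃ U' V' : M m, m < l ∧ x = C m U' V'})
    (hΨ : ∀ l (S T U V : M l), D l S T * D l U V - Ψ l T U • D l S V ∈
      Submodule.span R {x | ∃ m, ∃ U' V' : M m, l < m ∧ x = D m U' V'})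
     :
    ∀ l (V V' : M l),
      ∑ X : M l, Φ l X V * Ψ l X V = ∑ X : M l, Φ l X V' * Ψ l X V' := by
  intro l V V'
  have hsymm : ∀ W : M l, ∑ X, Φ l X W * Ψ l X W = ∑ X, Φ l W X * Ψ l X W := fun W =>
    sum_congr rfl fun X _ => by rw [Φ_symm hι2 hιmul hC2 hC3 hdual hΦ]
  rw [hsymm, hsymm]
  exact sum_Φ_mul_Ψ_eq hC3 hdual hτtr hΦ hΨ V V'

/-- Definition 2.18 is well posed: `∑ X, Φ l X V * Ψ l X V` is independent of `V`. -/
theorem k_lambda_well_defined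
    {R A : Type*} [CommRing R] [Ring A] [Algebra R A]
    {Λ : Type*} [PartialOrder Λ] [Fintype Λ] [DecidableEq Λ]
    {M : Λ → Type*} [∀ l, Fintype (M l)] [∀ l, DecidableEq (M l)]
    (C D : ∀ l, M l → M l → A)
    (bC : Module.Basis ((l : Λ) × (M l × M l)) R A)
    (hbC : ∀ l S T, bC ⟨l, (S, T)⟩ = C l S T)
    (ι : A →ₗ[R] A)
    (hι2 : ∀ x, ι (ι x) = x)
    (hιmul : ∀ x y, ι (x * y) = ι y * ι x)
    (hC2 : ∀ l (S T : M l), ι (C l S T) - C l T S ∈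
      Submodule.span R {x | ∃ m, ∃ U V : M m, m < l ∧ x = C m U V})
    (r : A → ∀ l, M l → M l → R)
    (hC3 : ∀ (a : A) l (S T : M l), a * C l S T - ∑ S', r a l S' S • C l S' T ∈
      Submodule.span R {x | ∃ m, ∃ U V : M m, m < l ∧ x = C m U V})
    (τ : A →ₗ[R] R)
    (hτtr : ∀ x y, τ (x * y) = τ (y * x))
    (bD : Module.Basis ((l : Λ) × (M l × M l)) R A)
    (hbD : ∀ l S T, bD ⟨l, (S, T)⟩ = D l S T)
    (hdual : ∀ l m (S T : M l) (U V : M m),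
      τ (C l S T * D m U V) =
        if (⟨l, (S, T)⟩ : (l : Λ) × (M l × M l)) = ⟨m, (V, U)⟩ then 1 else 0)
    (Φ Ψ : ∀ l, M l → M l → R)
    (hΦ : ∀ l (S T U V : M l), C l S T * C l U V - Φ l T U • C l S V ∈
      Submodule.span R {x | ∃ m, ∃ U' V' : M m, m < l ∧ x = C m U' V'})
    (hΨ : ∀ l (S T U V : M l), D l S T * D l U V - Ψ l T U • D l S V ∈
      Submodule.span R {x | ∃ m, ∃ U' V' : M m, l < m ∧ x = D m U' V'})
     :
    ∀ l (V V' : M l),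
      ∑ X : M l, Φ l X V * Ψ l X V = ∑ X : M l, Φ l X V' * Ψ l X V' :=
  k_lambda_well_defined_general C D ι hι2 hιmul hC2 r hC3 τ hτtr hdual Φ Ψ hΦ hΨ
end

section
/- Let A be a symmetric cellular algebra and λ ∈ Λ. Fix an enumeration of M(λ) and let G(λ) = (Φ(S_i,S_j)) and G'(λ) = (Ψ(S_i,S_j)) be the Gram matrices of the cellular basis and of its dual basis. Then G(λ) · G'(λ) = k_λ · E, where E is the identity matrix of size |M(λ)|. -/
/-!
Since `τ (C l S T * D m U V)` vanishes for `m ≠ l`, the functional `τ (_ * D l U V)` ignores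
cellular terms of lower level and `τ (C l S T * _)` ignores dual terms of higher level, so the
structure constants at level `l` can be read off with `τ`. In particular the coefficient of
`C l X U` in `D l T S * C l S U` is `Ψ l X T`, which gives
`∑ X, Φ l S X * Ψ l X T = τ (C l S S * D l T S * C l S S * D l S S)`.
By cyclicity of `τ` this is `τ (a * C l S S * D l T S)` with `a = C l S S * D l S S`; expanding
`a * C l S S` at level `l` only produces elements `C l _ S`, which pair to zero with `D l T S`
unless `S = T`. On the diagonal, the anti-involution `ι` makes `Φ l` symmetric, and the sum is
`k l`.
-/

open Finset

namespace CellularAlgebra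

variable {R A : Type*} [CommRing R] [Ring A] [Algebra R A] {Λ : Type*} {M : Λ → Type*}

variable (R) in
def levelSpan (C : ∀ l, M l → M l → A) (p : Λ → Prop) : Submodule R A :=
  Submodule.span R {x | ∃ m, ∃ U V : M m, p m ∧ x = C m U V}

def IsDualPairing [DecidableEq Λ] [∀ l, DecidableEq (M l)] (τ : A →ₗ[R] R)
    (C D : ∀ l, M l → M l → A) : Prop :=
  ∀ l m (S T : M l) (U V : M m),
    τ (C l S T * D m U V) = if (⟨l, (S, T)⟩ : (l : Λ) × (M l × M l)) = ⟨m, (V, U)⟩ then 1 else 0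

variable {C D : ∀ l, M l → M l → A} {r : A → ∀ l, M l → M l → R} {Φ Ψ : ∀ l, M l → M l → R}

theorem cell_mem_levelSpan {p : Λ → Prop} {m : Λ} (hm : p m) (U V : M m) :
    C m U V ∈ levelSpan R C p :=
  Submodule.subset_span ⟨m, U, V, hm, rfl⟩

theorem levelSpan_mono {p q : Λ → Prop} (hpq : ∀ m, p m → q m) :
    levelSpan R C p ≤ levelSpan R C q :=
  Submodule.span_mono fun _ ⟨m, U, V, hm, hx⟩ => ⟨m, U, V, hpq m hm, hx⟩

section Pairing

variable [DecidableEq Λ] [∀ l, DecidableEq (M l)] {τ : A →ₗ[R] R}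

theorem trace_cell_mul_dual (hdual : IsDualPairing τ C D) {l : Λ} (S T U V : M l) :
    τ (C l S T * D l U V) = if S = V ∧ T = U then 1 else 0 := by
  rw [hdual]
  simp only [Sigma.mk.injEq, heq_eq_eq, Prod.mk.injEq, true_and]

theorem trace_cell_mul_dual_of_ne (hdual : IsDualPairing τ C D) {l m : Λ} (hlm : l ≠ m)
    (S T : M l) (U V : M m) : τ (C l S T * D m U V) = 0 := by
  rw [hdual, if_neg]
  exact fun h => hlm (congrArg Sigma.fst h)

theorem trace_mul_dual_eq_zero_of_mem_levelSpan (hdual : IsDualPairing τ C D) {p : Λ → Prop}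
    {x : A} (hx : x ∈ levelSpan R C p) {l : Λ} (hl : ¬ p l) (U V : M l) :
    τ (x * D l U V) = 0 := by
  suffices levelSpan R C p ≤ LinearMap.ker (τ ∘ₗ LinearMap.mulRight R (D l U V)) from this hx
  refine Submodule.span_le.mpr ?_
  rintro _ ⟨m, P, Q, hm, rfl⟩
  exact trace_cell_mul_dual_of_ne hdual (fun h : m = l => hl (h ▸ hm)) P Q U V

theorem trace_cell_mul_eq_zero_of_mem_levelSpan (hdual : IsDualPairing τ C D) {p : Λ → Prop}
    {y : A} (hy : y ∈ levelSpan R D p) {l : Λ} (hl : ¬ p l) (U V : M l) :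
    τ (C l U V * y) = 0 := by
  suffices levelSpan R D p ≤ LinearMap.ker (τ ∘ₗ LinearMap.mulLeft R (C l U V)) from this hy
  refine Submodule.span_le.mpr ?_
  rintro _ ⟨m, P, Q, hm, rfl⟩
  exact trace_cell_mul_dual_of_ne hdual (fun h : l = m => hl (h ▸ hm)) U V P Q

end Pairing

section Ideal

variable [PartialOrder Λ]

theorem map_mem_levelSpan_lt {ι : A →ₗ[R] A}
    (hC2 : ∀ l (S T : M l), ι (C l S T) - C l T S ∈ levelSpan R C (· < l))
    {l : Λ} {x : A} (hx : x ∈ levelSpan R C (· < l)) : ι x ∈ levelSpan R C (· < l) := by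
  suffices levelSpan R C (· < l) ≤ (levelSpan R C (· < l)).comap ι from this hx
  refine Submodule.span_le.mpr ?_
  rintro _ ⟨m, U, V, hm, rfl⟩
  rw [SetLike.mem_coe, Submodule.mem_comap, ← sub_add_cancel (ι (C m U V)) (C m V U)]
  exact add_mem (levelSpan_mono (fun n hn => hn.trans hm) (hC2 m U V))
    (cell_mem_levelSpan (p := (· < l)) hm V U)

variable [∀ l, Fintype (M l)]

theorem mul_mem_levelSpan_lt
    (hC3 : ∀ a l (S T : M l), a * C l S T - ∑ S', r a l S' S • C l S' T ∈ levelSpan R C (· < l))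
    (a : A) {l : Λ} {x : A} (hx : x ∈ levelSpan R C (· < l)) :
    a * x ∈ levelSpan R C (· < l) := by
  suffices levelSpan R C (· < l) ≤ (levelSpan R C (· < l)).comap (LinearMap.mulLeft R a) from
    this hx
  refine Submodule.span_le.mpr ?_
  rintro _ ⟨m, U, V, hm, rfl⟩
  have hlower : levelSpan R C (· < m) ≤ levelSpan R C (· < l) :=
    levelSpan_mono fun n hn => hn.trans hm
  rw [SetLike.mem_coe, Submodule.mem_comap, LinearMap.mulLeft_apply,
    ← sub_add_cancel (a * C m U V) (∑ S', r a m S' U • C m S' V)]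
  exact add_mem (hlower (hC3 a m U V))
    (sum_mem fun S' _ => Submodule.smul_mem _ _ (cell_mem_levelSpan (p := (· < l)) hm S' V))

theorem mem_levelSpan_lt_mul {ι : A →ₗ[R] A}
    (hι2 : ∀ x, ι (ι x) = x) (hιmul : ∀ x y, ι (x * y) = ι y * ι x)
    (hC2 : ∀ l (S T : M l), ι (C l S T) - C l T S ∈ levelSpan R C (· < l))
    (hC3 : ∀ a l (S T : M l), a * C l S T - ∑ S', r a l S' S • C l S' T ∈ levelSpan R C (· < l))
    (a : A) {l : Λ} {x : A} (hx : x ∈ levelSpan R C (· < l)) :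
    x * a ∈ levelSpan R C (· < l) := by
  rw [← hι2 (x * a), hιmul]
  exact map_mem_levelSpan_lt hC2 (mul_mem_levelSpan_lt hC3 _ (map_mem_levelSpan_lt hC2 hx))

end Ideal

section StructureConstants

variable [PartialOrder Λ] [DecidableEq Λ] [∀ l, DecidableEq (M l)] {τ : A →ₗ[R] R} {l : Λ}

theorem trace_cell_mul_cell_mul_dual (hdual : IsDualPairing τ C D)
    (hΦ : ∀ S T U V : M l, C l S T * C l U V - Φ l T U • C l S V ∈ levelSpan R C (· < l))
    (S T U V P Q : M l) :
    τ (C l S T * C l U V * D l P Q) = if S = Q ∧ V = P then Φ l T U else 0 := by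
  have hlower := trace_mul_dual_eq_zero_of_mem_levelSpan hdual (hΦ S T U V) (lt_irrefl l) P Q
  rw [sub_mul, map_sub, sub_eq_zero] at hlower
  rw [hlower, smul_mul_assoc, map_smul, trace_cell_mul_dual hdual, smul_eq_mul, mul_ite, mul_one,
    mul_zero]

theorem trace_cell_mul_dual_mul_dual (hdual : IsDualPairing τ C D)
    (hΨ : ∀ S T U V : M l, D l S T * D l U V - Ψ l T U • D l S V ∈ levelSpan R D (l < ·))
    (S T U V P Q : M l) :
    τ (C l S T * (D l U V * D l P Q)) = if S = Q ∧ T = U then Ψ l V P else 0 := by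
  have hupper := trace_cell_mul_eq_zero_of_mem_levelSpan hdual (hΨ U V P Q) (lt_irrefl l) S T
  rw [mul_sub, map_sub, sub_eq_zero] at hupper
  rw [hupper, mul_smul_comm, map_smul, trace_cell_mul_dual hdual, smul_eq_mul, mul_ite, mul_one,
    mul_zero]

theorem eq_zero_of_smul_cell_mem_levelSpan_lt (hdual : IsDualPairing τ C D) {c : R} {S T : M l}
    (h : c • C l S T ∈ levelSpan R C (· < l)) : c = 0 := by
  have hlower := trace_mul_dual_eq_zero_of_mem_levelSpan hdual h (lt_irrefl l) T S
  rwa [smul_mul_assoc, map_smul, trace_cell_mul_dual hdual, if_pos ⟨rfl, rfl⟩, smul_eq_mul,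
    mul_one] at hlower

variable [∀ l, Fintype (M l)]

theorem trace_mul_cell_mul_dual
    (hC3 : ∀ a l (S T : M l), a * C l S T - ∑ S', r a l S' S • C l S' T ∈ levelSpan R C (· < l))
    (hdual : IsDualPairing τ C D) (a : A) (S U V W : M l) :
    τ (a * C l S U * D l V W) = if U = V then r a l W S else 0 := by
  have hlower := trace_mul_dual_eq_zero_of_mem_levelSpan hdual (hC3 a l S U) (lt_irrefl l) V W
  rw [sub_mul, map_sub, sum_mul, map_sum, sub_eq_zero] at hlower
  simp only [hlower, smul_mul_assoc, map_smul, trace_cell_mul_dual hdual, smul_eq_mul, mul_ite,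
    mul_one, mul_zero]
  split_ifs with hUV <;> simp [hUV]

theorem cellForm_symm {ι : A →ₗ[R] A} (hι2 : ∀ x, ι (ι x) = x)
    (hιmul : ∀ x y, ι (x * y) = ι y * ι x)
    (hC2 : ∀ l (S T : M l), ι (C l S T) - C l T S ∈ levelSpan R C (· < l))
    (hC3 : ∀ a l (S T : M l), a * C l S T - ∑ S', r a l S' S • C l S' T ∈ levelSpan R C (· < l))
    (hdual : IsDualPairing τ C D)
    (hΦ : ∀ S T U V : M l, C l S T * C l U V - Φ l T U • C l S V ∈ levelSpan R C (· < l))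
    (T U : M l) : Φ l T U = Φ l U T := by
  -- `ι` applied to `C T T * C U U ≡ Φ T U • C T U`, where `ι (C S T) ≡ C T S` modulo lower levels
  have hflip : C l U U * C l T T - Φ l T U • C l U T ∈ levelSpan R C (· < l) := by
    have e : C l U U * C l T T - Φ l T U • C l U T =
        ι (C l T T * C l U U - Φ l T U • C l T U) - (ι (C l U U) - C l U U) * ι (C l T T)
          - C l U U * (ι (C l T T) - C l T T) + Φ l T U • (ι (C l T U) - C l U T) := by
      rw [map_sub, map_smul, hιmul]
      simp only [sub_mul, mul_sub, smul_sub]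
      abel
    rw [e]
    exact add_mem (sub_mem (sub_mem (map_mem_levelSpan_lt hC2 (hΦ T T U U))
      (mem_levelSpan_lt_mul hι2 hιmul hC2 hC3 _ (hC2 l U U)))
      (mul_mem_levelSpan_lt hC3 _ (hC2 l T T))) (Submodule.smul_mem _ _ (hC2 l T U))
  have hdiff : (Φ l U T - Φ l T U) • C l U T ∈ levelSpan R C (· < l) := by
    rw [sub_smul, ← sub_sub_sub_cancel_left _ _ (C l U U * C l T T)]
    exact sub_mem hflip (hΦ U U T T)
  exact (sub_eq_zero.mp (eq_zero_of_smul_cell_mem_levelSpan_lt hdual hdiff)).symm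

theorem dual_mul_cell_sub_sum_mem (hτtr : ∀ x y, τ (x * y) = τ (y * x))
    (hC3 : ∀ a l (S T : M l), a * C l S T - ∑ S', r a l S' S • C l S' T ∈ levelSpan R C (· < l))
    (hdual : IsDualPairing τ C D)
    (hΨ : ∀ S T U V : M l, D l S T * D l U V - Ψ l T U • D l S V ∈ levelSpan R D (l < ·))
    (T S U : M l) : D l T S * C l S U - ∑ X, Ψ l X T • C l X U ∈ levelSpan R C (· < l) := by
  have hr (X : M l) : r (D l T S) l X S = Ψ l X T := by
    have h := trace_mul_cell_mul_dual hC3 hdual (D l T S) S U U X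
    rwa [if_pos rfl, mul_assoc, hτtr, mul_assoc, trace_cell_mul_dual_mul_dual hdual hΨ,
      if_pos ⟨rfl, rfl⟩, eq_comm] at h
  simpa only [hr] using hC3 (D l T S) l S U

theorem sum_cellForm_mul_dualForm_eq_trace (hτtr : ∀ x y, τ (x * y) = τ (y * x))
    (hC3 : ∀ a l (S T : M l), a * C l S T - ∑ S', r a l S' S • C l S' T ∈ levelSpan R C (· < l))
    (hdual : IsDualPairing τ C D)
    (hΦ : ∀ S T U V : M l, C l S T * C l U V - Φ l T U • C l S V ∈ levelSpan R C (· < l))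
    (hΨ : ∀ S T U V : M l, D l S T * D l U V - Ψ l T U • D l S V ∈ levelSpan R D (l < ·))
    (S T : M l) :
    ∑ X, Φ l S X * Ψ l X T = τ (C l S S * (D l T S * C l S S) * D l S S) := by
  have hlower := trace_mul_dual_eq_zero_of_mem_levelSpan hdual
    (mul_mem_levelSpan_lt hC3 (C l S S) (dual_mul_cell_sub_sum_mem hτtr hC3 hdual hΨ T S S))
    (lt_irrefl l) S S
  rw [mul_sub, sub_mul, map_sub, sub_eq_zero] at hlower
  rw [hlower, mul_sum, sum_mul, map_sum]
  refine sum_congr rfl fun X _ => ?_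
  rw [mul_smul_comm, smul_mul_assoc, map_smul, trace_cell_mul_cell_mul_dual hdual hΦ,
    if_pos ⟨rfl, rfl⟩, smul_eq_mul, mul_comm]

theorem sum_cellForm_mul_dualForm_eq_zero_of_ne (hτtr : ∀ x y, τ (x * y) = τ (y * x))
    (hC3 : ∀ a l (S T : M l), a * C l S T - ∑ S', r a l S' S • C l S' T ∈ levelSpan R C (· < l))
    (hdual : IsDualPairing τ C D)
    (hΦ : ∀ S T U V : M l, C l S T * C l U V - Φ l T U • C l S V ∈ levelSpan R C (· < l))
    (hΨ : ∀ S T U V : M l, D l S T * D l U V - Ψ l T U • D l S V ∈ levelSpan R D (l < ·))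
    {S T : M l} (hST : S ≠ T) : ∑ X, Φ l S X * Ψ l X T = 0 := by
  rw [sum_cellForm_mul_dualForm_eq_trace hτtr hC3 hdual hΦ hΨ,
    show C l S S * (D l T S * C l S S) * D l S S = C l S S * D l T S * (C l S S * D l S S) by
      simp only [mul_assoc],
    hτtr, ← mul_assoc, trace_mul_cell_mul_dual hC3 hdual, if_neg hST]

end StructureConstants

end CellularAlgebra

open CellularAlgebra

theorem gram_matrices_product_general
    {R A : Type*} [CommRing R] [Ring A] [Algebra R A]
    {Λ : Type*} [PartialOrder Λ] [DecidableEq Λ]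
    {M : Λ → Type*} [∀ l, Fintype (M l)] [∀ l, DecidableEq (M l)]
    (C D : ∀ l, M l → M l → A)
    (ι : A →ₗ[R] A)
    (hι2 : ∀ x, ι (ι x) = x)
    (hιmul : ∀ x y, ι (x * y) = ι y * ι x)
    (hC2 : ∀ l (S T : M l), ι (C l S T) - C l T S ∈
      Submodule.span R {x | ∃ m, ∃ U V : M m, m < l ∧ x = C m U V})
    (r : A → ∀ l, M l → M l → R)
    (hC3 : ∀ (a : A) l (S T : M l), a * C l S T - ∑ S', r a l S' S • C l S' T ∈
      Submodule.span R {x | ∃ m, ∃ U V : M m, m < l ∧ x = C m U V})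
    (τ : A →ₗ[R] R)
    (hτtr : ∀ x y, τ (x * y) = τ (y * x))
    (hdual : ∀ l m (S T : M l) (U V : M m),
      τ (C l S T * D m U V) =
        if (⟨l, (S, T)⟩ : (l : Λ) × (M l × M l)) = ⟨m, (V, U)⟩ then 1 else 0)
    (Φ Ψ : ∀ l, M l → M l → R)
    (hΦ : ∀ l (S T U V : M l), C l S T * C l U V - Φ l T U • C l S V ∈
      Submodule.span R {x | ∃ m, ∃ U' V' : M m, m < l ∧ x = C m U' V'})
    (hΨ : ∀ l (S T U V : M l), D l S T * D l U V - Ψ l T U • D l S V ∈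
      Submodule.span R {x | ∃ m, ∃ U' V' : M m, l < m ∧ x = D m U' V'})
    (k : Λ → R)
    (hk : ∀ l (V : M l), ∑ X : M l, Φ l X V * Ψ l X V = k l) :
    ∀ l, (Matrix.of fun S T : M l => Φ l S T) * (Matrix.of fun S T : M l => Ψ l S T)
      = k l • (1 : Matrix (M l) (M l) R) := by
  intro l
  ext S T
  simp only [Matrix.mul_apply, Matrix.of_apply, Matrix.smul_apply, Matrix.one_apply, smul_eq_mul,
    mul_ite, mul_one, mul_zero]
  split_ifs with hST
  · subst hST
    rw [← hk l S]
    exact sum_congr rfl fun X _ => by rw [cellForm_symm hι2 hιmul hC2 hC3 hdual (hΦ l)]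
  · exact sum_cellForm_mul_dualForm_eq_zero_of_ne hτtr hC3 hdual (hΦ l) (hΨ l) hST

/-- Lemma 2.19: the Gram matrices of the cellular basis and of the dual basis satisfy
`G(l) * G′(l) = k l • 1`. -/
theorem gram_matrices_product
    {R A : Type*} [CommRing R] [Ring A] [Algebra R A]
    {Λ : Type*} [PartialOrder Λ] [Fintype Λ] [DecidableEq Λ]
    {M : Λ → Type*} [∀ l, Fintype (M l)] [∀ l, DecidableEq (M l)]
    (C D : ∀ l, M l → M l → A)
    (bC : Module.Basis ((l : Λ) × (M l × M l)) R A)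
    (hbC : ∀ l S T, bC ⟨l, (S, T)⟩ = C l S T)
    (ι : A →ₗ[R] A)
    (hι2 : ∀ x, ι (ι x) = x)
    (hιmul : ∀ x y, ι (x * y) = ι y * ι x)
    (hC2 : ∀ l (S T : M l), ι (C l S T) - C l T S ∈
      Submodule.span R {x | ∃ m, ∃ U V : M m, m < l ∧ x = C m U V})
    (r : A → ∀ l, M l → M l → R)
    (hC3 : ∀ (a : A) l (S T : M l), a * C l S T - ∑ S', r a l S' S • C l S' T ∈
      Submodule.span R {x | ∃ m, ∃ U V : M m, m < l ∧ x = C m U V})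
    (τ : A →ₗ[R] R)
    (hτtr : ∀ x y, τ (x * y) = τ (y * x))
    (bD : Module.Basis ((l : Λ) × (M l × M l)) R A)
    (hbD : ∀ l S T, bD ⟨l, (S, T)⟩ = D l S T)
    (hdual : ∀ l m (S T : M l) (U V : M m),
      τ (C l S T * D m U V) =
        if (⟨l, (S, T)⟩ : (l : Λ) × (M l × M l)) = ⟨m, (V, U)⟩ then 1 else 0)
    (Φ Ψ : ∀ l, M l → M l → R)
    (hΦ : ∀ l (S T U V : M l), C l S T * C l U V - Φ l T U • C l S V ∈
      Submodule.span R {x | ∃ m, ∃ U' V' : M m, m < l ∧ x = C m U' V'})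
    (hΨ : ∀ l (S T U V : M l), D l S T * D l U V - Ψ l T U • D l S V ∈
      Submodule.span R {x | ∃ m, ∃ U' V' : M m, l < m ∧ x = D m U' V'})
    (k : Λ → R)
    (hk : ∀ l (V : M l), ∑ X : M l, Φ l X V * Ψ l X V = k l) :
    ∀ l, (Matrix.of fun S T : M l => Φ l S T) * (Matrix.of fun S T : M l => Ψ l S T)
      = k l • (1 : Matrix (M l) (M l) R) :=
  gram_matrices_product_general C D ι hι2 hιmul hC2 r hC3 τ hτtr hdual Φ Ψ hΦ hΨ k hk
end

section
/- Let A be a symmetric cellular algebra over an integral domain R. For any λ ∈ Λ, if the radical of the bilinear form Φ_λ on the cell module W(λ) is nonzero (equivalently det G(λ) = 0), then k_λ = 0. -/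
/-!
Work modulo the span of the cells below `l`: it is a two-sided ideal (left by the cellular
action, right via the involution), and `τ (· * D l c d)` kills it because `C` and `D` are dual
bases for `τ`. Hence `τ (C_ab C_cd D_ef) = Φ l b c δ_af δ_de`, which with the involution gives
symmetry of `Φ l`, and `τ (C_ab D_ef C_gh D_cd) = δ_gf δ_ad δ_hc ∑ₓ Φ l b X Ψ l X e`.
As `τ (C_pp D_ep C_pp D_pp) = τ (C_pp D_pp C_pp D_ep)`, the product `Φ l Ψ l` is the scalar
matrix `k l`, so a nonzero `v` with `v Φ l = 0` gives `k l v = 0`.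
-/

open Finset

namespace SymmetricCellular

variable {R A : Type*} [CommRing R] [Ring A] [Algebra R A] {Λ : Type*} {M : Λ → Type*}

def IsDualPairing [DecidableEq Λ] [∀ l, DecidableEq (M l)] (τ : A →ₗ[R] R)
    (C D : ∀ l, M l → M l → A) : Prop :=
  ∀ l m (S T : M l) (U V : M m),
    τ (C l S T * D m U V) =
      if (⟨l, (S, T)⟩ : (l : Λ) × (M l × M l)) = ⟨m, (V, U)⟩ then 1 else 0

lemma IsDualPairing.trace_C_mul_D [DecidableEq Λ] [∀ l, DecidableEq (M l)] {τ : A →ₗ[R] R}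
    {C D : ∀ l, M l → M l → A} (hdual : IsDualPairing τ C D) {l : Λ} (a b c d : M l) :
    τ (C l a b * D l c d) = if a = d ∧ b = c then 1 else 0 := by
  simp [hdual l l]

variable [Preorder Λ]

variable (R) in
def cellSpanBelow (C : ∀ l, M l → M l → A) (l : Λ) : Submodule R A :=
  Submodule.span R {x | ∃ m, ∃ U V : M m, m < l ∧ x = C m U V}

variable (R) in
def cellSpanAbove (D : ∀ l, M l → M l → A) (l : Λ) : Submodule R A :=
  Submodule.span R {x | ∃ m, ∃ U V : M m, l < m ∧ x = D m U V}

def IsLeftCellAction [∀ l, Fintype (M l)] (r : A → ∀ l, M l → M l → R)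
    (C : ∀ l, M l → M l → A) : Prop :=
  ∀ (a : A) l (S T : M l), a * C l S T - ∑ S', r a l S' S • C l S' T ∈ cellSpanBelow R C l

def IsCellInvolution (ι : A →ₗ[R] A) (C : ∀ l, M l → M l → A) : Prop :=
  ∀ l (S T : M l), ι (C l S T) - C l T S ∈ cellSpanBelow R C l

def IsCellForm (Φ : ∀ l, M l → M l → R) (C : ∀ l, M l → M l → A) : Prop :=
  ∀ l (S T U V : M l), C l S T * C l U V - Φ l T U • C l S V ∈ cellSpanBelow R C l

def IsDualCellForm (Ψ : ∀ l, M l → M l → R) (D : ∀ l, M l → M l → A) : Prop :=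
  ∀ l (S T U V : M l), D l S T * D l U V - Ψ l T U • D l S V ∈ cellSpanAbove R D l

section Ideals

variable {C : ∀ l, M l → M l → A} {l : Λ}

lemma C_mem_cellSpanBelow {m : Λ} (h : m < l) (U V : M m) : C m U V ∈ cellSpanBelow R C l :=
  Submodule.subset_span ⟨m, U, V, h, rfl⟩

lemma cellSpanBelow_mono {m : Λ} (h : m ≤ l) : cellSpanBelow R C m ≤ cellSpanBelow R C l :=
  Submodule.span_mono fun _ ⟨n, U, V, hn, hx⟩ => ⟨n, U, V, hn.trans_le h, hx⟩

lemma IsLeftCellAction.mul_mem [∀ l, Fintype (M l)] {r : A → ∀ l, M l → M l → R}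
    (hC3 : IsLeftCellAction r C) (a : A) {x : A} (hx : x ∈ cellSpanBelow R C l) :
    a * x ∈ cellSpanBelow R C l := by
  induction hx using Submodule.span_induction with
  | mem y hy =>
    obtain ⟨m, U, V, hm, rfl⟩ := hy
    rw [← sub_add_cancel (a * C m U V) (∑ S', r a m S' U • C m S' V)]
    exact add_mem (cellSpanBelow_mono hm.le (hC3 a m U V))
      (sum_mem fun S' _ => Submodule.smul_mem _ _ (C_mem_cellSpanBelow hm S' V))
  | zero => simp
  | add x y _ _ hx hy => rw [mul_add]; exact add_mem hx hy
  | smul c x _ hx => rw [mul_smul_comm]; exact Submodule.smul_mem _ c hx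

lemma IsCellInvolution.map_mem {ι : A →ₗ[R] A} (hC2 : IsCellInvolution ι C) {x : A}
    (hx : x ∈ cellSpanBelow R C l) : ι x ∈ cellSpanBelow R C l := by
  induction hx using Submodule.span_induction with
  | mem y hy =>
    obtain ⟨m, U, V, hm, rfl⟩ := hy
    rw [← sub_add_cancel (ι (C m U V)) (C m V U)]
    exact add_mem (cellSpanBelow_mono hm.le (hC2 m U V)) (C_mem_cellSpanBelow hm V U)
  | zero => simp
  | add x y _ _ hx hy => rw [map_add]; exact add_mem hx hy
  | smul c x _ hx => rw [map_smul]; exact Submodule.smul_mem _ c hx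

lemma IsCellInvolution.map_sModEq {ι : A →ₗ[R] A} (hC2 : IsCellInvolution ι C) {x y : A}
    (h : x ≡ y [SMOD cellSpanBelow R C l]) : ι x ≡ ι y [SMOD cellSpanBelow R C l] := by
  rw [SModEq.sub_mem, ← map_sub] at *
  exact hC2.map_mem h

lemma mul_sModEq_mul [∀ l, Fintype (M l)] {ι : A →ₗ[R] A} (hι2 : ∀ x, ι (ι x) = x)
    (hιmul : ∀ x y, ι (x * y) = ι y * ι x) (hC2 : IsCellInvolution ι C)
    {r : A → ∀ l, M l → M l → R} (hC3 : IsLeftCellAction r C) {x x' y y' : A}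
    (hx : x ≡ x' [SMOD cellSpanBelow R C l]) (hy : y ≡ y' [SMOD cellSpanBelow R C l]) :
    x * y ≡ x' * y' [SMOD cellSpanBelow R C l] := by
  rw [SModEq.sub_mem] at *
  have hxy : (x - x') * y ∈ cellSpanBelow R C l := by
    rw [← hι2 ((x - x') * y), hιmul]
    exact hC2.map_mem (hC3.mul_mem _ (hC2.map_mem hx))
  rw [show x * y - x' * y' = (x - x') * y + x' * (y - y') by noncomm_ring]
  exact add_mem hxy (hC3.mul_mem x' hy)

end Ideals

section Trace

variable [DecidableEq Λ] [∀ l, DecidableEq (M l)] {C D : ∀ l, M l → M l → A}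
  {τ : A →ₗ[R] R} {l : Λ}

lemma IsDualPairing.trace_mul_D_eq_zero (hdual : IsDualPairing τ C D) {x : A}
    (hx : x ∈ cellSpanBelow R C l) (c d : M l) : τ (x * D l c d) = 0 := by
  induction hx using Submodule.span_induction with
  | mem y hy =>
    obtain ⟨m, U, V, hm, rfl⟩ := hy
    rw [hdual, if_neg fun h => hm.ne (congrArg Sigma.fst h)]
  | zero => simp
  | add x y _ _ hx hy => rw [add_mul, map_add, hx, hy, add_zero]
  | smul c x _ hx => rw [smul_mul_assoc, map_smul, hx, smul_zero]

lemma IsDualPairing.trace_C_mul_eq_zero (hdual : IsDualPairing τ C D) {y : A}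
    (hy : y ∈ cellSpanAbove R D l) (a b : M l) : τ (C l a b * y) = 0 := by
  induction hy using Submodule.span_induction with
  | mem y hy =>
    obtain ⟨m, U, V, hm, rfl⟩ := hy
    rw [hdual, if_neg fun h => hm.ne (congrArg Sigma.fst h)]
  | zero => simp
  | add x y _ _ hx hy => rw [mul_add, map_add, hx, hy, add_zero]
  | smul c x _ hx => rw [mul_smul_comm, map_smul, hx, smul_zero]

lemma IsDualPairing.trace_mul_D_congr (hdual : IsDualPairing τ C D) {y z : A}
    (h : y ≡ z [SMOD cellSpanBelow R C l]) (c d : M l) : τ (y * D l c d) = τ (z * D l c d) := by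
  rw [← sub_eq_zero, ← map_sub, ← sub_mul]
  exact hdual.trace_mul_D_eq_zero (SModEq.sub_mem.mp h) c d

lemma IsDualPairing.trace_C_mul_congr (hdual : IsDualPairing τ C D) {y z : A}
    (h : y ≡ z [SMOD cellSpanAbove R D l]) (a b : M l) : τ (C l a b * y) = τ (C l a b * z) := by
  rw [← sub_eq_zero, ← map_sub, ← mul_sub]
  exact hdual.trace_C_mul_eq_zero (SModEq.sub_mem.mp h) a b

lemma IsDualPairing.trace_C_mul_C_mul_D (hdual : IsDualPairing τ C D)
    {Φ : ∀ l, M l → M l → R} (hΦ : IsCellForm Φ C) (a b c d e f : M l) :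
    τ (C l a b * C l c d * D l e f) = Φ l b c * if a = f ∧ d = e then 1 else 0 := by
  rw [hdual.trace_mul_D_congr (SModEq.sub_mem.mpr (hΦ l a b c d)), smul_mul_assoc, map_smul,
    hdual.trace_C_mul_D, smul_eq_mul]

variable [∀ l, Fintype (M l)]

/-- Evaluate `τ (C l a x * D l x x * D l e f)` once through `hΨ` and once through `hC3`. -/
lemma IsDualPairing.coeff_D_eq (hdual : IsDualPairing τ C D)
    (hτtr : ∀ x y, τ (x * y) = τ (y * x)) {r : A → ∀ l, M l → M l → R} (hC3 : IsLeftCellAction r C)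
    {Ψ : ∀ l, M l → M l → R} (hΨ : IsDualCellForm Ψ D) (e f x a : M l) :
    r (D l e f) l x a = if a = f then Ψ l x e else 0 := by
  have viaΨ : τ (C l a x * (D l x x * D l e f)) = if a = f then Ψ l x e else 0 := by
    rw [hdual.trace_C_mul_congr (SModEq.sub_mem.mpr (hΨ l x x e f)), mul_smul_comm, map_smul,
      hdual.trace_C_mul_D, smul_eq_mul]
    simp
  have viaC3 : τ (C l a x * (D l x x * D l e f)) = r (D l e f) l x a := by
    rw [← mul_assoc, hτtr, ← mul_assoc,
      hdual.trace_mul_D_congr (SModEq.sub_mem.mpr (hC3 (D l e f) l a x))]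
    simp [sum_mul, hdual.trace_C_mul_D]
  rw [← viaC3, viaΨ]

lemma IsDualPairing.trace_C_mul_D_mul_C_mul_D (hdual : IsDualPairing τ C D)
    (hτtr : ∀ x y, τ (x * y) = τ (y * x)) {r : A → ∀ l, M l → M l → R}
    (hC3 : IsLeftCellAction r C) {Φ Ψ : ∀ l, M l → M l → R} (hΦ : IsCellForm Φ C)
    (hΨ : IsDualCellForm Ψ D) (a b e f g h c d : M l) :
    τ (C l a b * (D l e f * C l g h) * D l c d) =
      if g = f ∧ a = d ∧ h = c then ∑ X, Φ l b X * Ψ l X e else 0 := by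
  have hDC : C l a b * (D l e f * C l g h) ≡ C l a b * ∑ X, r (D l e f) l X g • C l X h
      [SMOD cellSpanBelow R C l] := by
    rw [SModEq.sub_mem, ← mul_sub]
    exact hC3.mul_mem _ (hC3 _ l g h)
  rw [hdual.trace_mul_D_congr hDC, mul_sum, sum_mul, map_sum]
  simp only [mul_smul_comm, smul_mul_assoc, map_smul, ← mul_assoc,
    hdual.trace_C_mul_C_mul_D hΦ, hdual.coeff_D_eq hτtr hC3 hΨ, smul_eq_mul]
  split_ifs <;> simp_all [mul_comm]

lemma IsCellForm.comm (hdual : IsDualPairing τ C D) {ι : A →ₗ[R] A}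
    (hι2 : ∀ x, ι (ι x) = x) (hιmul : ∀ x y, ι (x * y) = ι y * ι x) (hC2 : IsCellInvolution ι C)
    {r : A → ∀ l, M l → M l → R} (hC3 : IsLeftCellAction r C) {Φ : ∀ l, M l → M l → R}
    (hΦ : IsCellForm Φ C) (S T : M l) : Φ l S T = Φ l T S := by
  have hι : ∀ U V : M l, ι (C l U V) ≡ C l V U [SMOD cellSpanBelow R C l] :=
    fun U V => SModEq.sub_mem.mpr (hC2 l U V)
  have hcell : ∀ U V : M l,
      C l U U * C l V V ≡ Φ l U V • C l U V [SMOD cellSpanBelow R C l] :=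
    fun U V => SModEq.sub_mem.mpr (hΦ l U U V V)
  have key : Φ l T S • C l T S ≡ Φ l S T • C l T S [SMOD cellSpanBelow R C l] :=
    calc Φ l T S • C l T S ≡ C l T T * C l S S [SMOD cellSpanBelow R C l] :=
          (hcell T S).symm
      _ ≡ ι (C l T T) * ι (C l S S) [SMOD cellSpanBelow R C l] :=
          mul_sModEq_mul hι2 hιmul hC2 hC3 (hι T T).symm (hι S S).symm
      _ = ι (C l S S * C l T T) := (hιmul _ _).symm
      _ ≡ ι (Φ l S T • C l S T) [SMOD cellSpanBelow R C l] :=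
          hC2.map_sModEq (hcell S T)
      _ = Φ l S T • ι (C l S T) := map_smul _ _ _
      _ ≡ Φ l S T • C l T S [SMOD cellSpanBelow R C l] := (hι S T).smul _
  simpa [smul_mul_assoc, hdual.trace_C_mul_D] using (hdual.trace_mul_D_congr key S T).symm

lemma sum_Φ_mul_Ψ_of_ne (hdual : IsDualPairing τ C D) (hτtr : ∀ x y, τ (x * y) = τ (y * x))
    {r : A → ∀ l, M l → M l → R} (hC3 : IsLeftCellAction r C) {Φ Ψ : ∀ l, M l → M l → R}
    (hΦ : IsCellForm Φ C) (hΨ : IsDualCellForm Ψ D) {p e : M l} (hpe : p ≠ e) :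
    ∑ X, Φ l p X * Ψ l X e = 0 := by
  have hcyc : τ (C l p p * (D l e p * C l p p) * D l p p) =
      τ (C l p p * (D l p p * C l p p) * D l e p) := by
    simp only [← mul_assoc]
    rw [mul_assoc _ (C l p p), hτtr]
    simp only [mul_assoc]
  simpa [hdual.trace_C_mul_D_mul_C_mul_D hτtr hC3 hΦ hΨ, hpe] using hcyc

lemma of_Φ_mul_of_Ψ_eq_diagonal (hdual : IsDualPairing τ C D)
    (hτtr : ∀ x y, τ (x * y) = τ (y * x)) {ι : A →ₗ[R] A} (hι2 : ∀ x, ι (ι x) = x)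
    (hιmul : ∀ x y, ι (x * y) = ι y * ι x)
    (hC2 : IsCellInvolution ι C) {r : A → ∀ l, M l → M l → R} (hC3 : IsLeftCellAction r C)
    {Φ Ψ : ∀ l, M l → M l → R} (hΦ : IsCellForm Φ C) (hΨ : IsDualCellForm Ψ D) (l : Λ) :
    Matrix.of (Φ l) * Matrix.of (Ψ l) = Matrix.diagonal fun V => ∑ X, Φ l X V * Ψ l X V := by
  ext p e
  rw [Matrix.mul_apply, Matrix.diagonal_apply]
  simp only [Matrix.of_apply]
  split_ifs with hpe
  · subst hpe
    exact sum_congr rfl fun X _ => by rw [hΦ.comm hdual hι2 hιmul hC2 hC3]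
  · exact sum_Φ_mul_Ψ_of_ne hdual hτtr hC3 hΦ hΨ hpe

end Trace

end SymmetricCellular

open SymmetricCellular Matrix in
theorem k_lambda_zero_of_rad_nonzero_general
    {R A : Type*} [CommRing R] [Ring A] [Algebra R A]
    {Λ : Type*} [PartialOrder Λ] [DecidableEq Λ]
    {M : Λ → Type*} [∀ l, Fintype (M l)] [∀ l, DecidableEq (M l)]
    (C D : ∀ l, M l → M l → A)
    (ι : A →ₗ[R] A)
    (hι2 : ∀ x, ι (ι x) = x)
    (hιmul : ∀ x y, ι (x * y) = ι y * ι x)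
    (hC2 : ∀ l (S T : M l), ι (C l S T) - C l T S ∈
      Submodule.span R {x | ∃ m, ∃ U V : M m, m < l ∧ x = C m U V})
    (r : A → ∀ l, M l → M l → R)
    (hC3 : ∀ (a : A) l (S T : M l), a * C l S T - ∑ S', r a l S' S • C l S' T ∈
      Submodule.span R {x | ∃ m, ∃ U V : M m, m < l ∧ x = C m U V})
    (τ : A →ₗ[R] R)
    (hτtr : ∀ x y, τ (x * y) = τ (y * x))
    (hdual : ∀ l m (S T : M l) (U V : M m),
      τ (C l S T * D m U V) =
        if (⟨l, (S, T)⟩ : (l : Λ) × (M l × M l)) = ⟨m, (V, U)⟩ then 1 else 0)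
    (Φ Ψ : ∀ l, M l → M l → R)
    (hΦ : ∀ l (S T U V : M l), C l S T * C l U V - Φ l T U • C l S V ∈
      Submodule.span R {x | ∃ m, ∃ U' V' : M m, m < l ∧ x = C m U' V'})
    (hΨ : ∀ l (S T U V : M l), D l S T * D l U V - Ψ l T U • D l S V ∈
      Submodule.span R {x | ∃ m, ∃ U' V' : M m, l < m ∧ x = D m U' V'})
    [IsDomain R]
    (k : Λ → R)
    (hk : ∀ l (V : M l), ∑ X : M l, Φ l X V * Ψ l X V = k l) :
    ∀ l, (∃ v : M l → R, v ≠ 0 ∧ ∀ T : M l, ∑ S : M l, v S * Φ l S T = 0) →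
      k l = 0 := by
  rintro l ⟨v, hv0, hv⟩
  have hΦΨ : of (Φ l) * of (Ψ l) = k l • 1 := by
    rw [of_Φ_mul_of_Ψ_eq_diagonal (D := D) hdual hτtr hι2 hιmul hC2 hC3 hΦ hΨ l]
    ext i j
    simp [diagonal_apply, one_apply, hk]
  have hvΦ : v ᵥ* of (Φ l) = 0 := funext hv
  have hkv : k l • v = 0 := by
    rw [← vecMul_one v, ← vecMul_smul, ← hΦΨ, ← vecMul_vecMul, hvΦ, zero_vecMul]
  exact (smul_eq_zero.mp hkv).resolve_right hv0

/-- Corollary 2.20: over an integral domain, if the radical of the bilinear form on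
the cell module `W(l)` is nonzero (there is a nonzero vector orthogonal to everything),
then `k l = 0`. -/
theorem k_lambda_zero_of_rad_nonzero
    {R A : Type*} [CommRing R] [Ring A] [Algebra R A]
    {Λ : Type*} [PartialOrder Λ] [Fintype Λ] [DecidableEq Λ]
    {M : Λ → Type*} [∀ l, Fintype (M l)] [∀ l, DecidableEq (M l)]
    (C D : ∀ l, M l → M l → A)
    (bC : Module.Basis ((l : Λ) × (M l × M l)) R A)
    (hbC : ∀ l S T, bC ⟨l, (S, T)⟩ = C l S T)
    (ι : A →ₗ[R] A)
    (hι2 : ∀ x, ι (ι x) = x)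
    (hιmul : ∀ x y, ι (x * y) = ι y * ι x)
    (hC2 : ∀ l (S T : M l), ι (C l S T) - C l T S ∈
      Submodule.span R {x | ∃ m, ∃ U V : M m, m < l ∧ x = C m U V})
    (r : A → ∀ l, M l → M l → R)
    (hC3 : ∀ (a : A) l (S T : M l), a * C l S T - ∑ S', r a l S' S • C l S' T ∈
      Submodule.span R {x | ∃ m, ∃ U V : M m, m < l ∧ x = C m U V})
    (τ : A →ₗ[R] R)
    (hτtr : ∀ x y, τ (x * y) = τ (y * x))
    (bD : Module.Basis ((l : Λ) × (M l × M l)) R A)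
    (hbD : ∀ l S T, bD ⟨l, (S, T)⟩ = D l S T)
    (hdual : ∀ l m (S T : M l) (U V : M m),
      τ (C l S T * D m U V) =
        if (⟨l, (S, T)⟩ : (l : Λ) × (M l × M l)) = ⟨m, (V, U)⟩ then 1 else 0)
    (Φ Ψ : ∀ l, M l → M l → R)
    (hΦ : ∀ l (S T U V : M l), C l S T * C l U V - Φ l T U • C l S V ∈
      Submodule.span R {x | ∃ m, ∃ U' V' : M m, m < l ∧ x = C m U' V'})
    (hΨ : ∀ l (S T U V : M l), D l S T * D l U V - Ψ l T U • D l S V ∈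
      Submodule.span R {x | ∃ m, ∃ U' V' : M m, l < m ∧ x = D m U' V'})
    [IsDomain R]
    (k : Λ → R)
    (hk : ∀ l (V : M l), ∑ X : M l, Φ l X V * Ψ l X V = k l) :
    ∀ l, (∃ v : M l → R, v ≠ 0 ∧ ∀ T : M l, ∑ S : M l, v S * Φ l S T = 0) →
      k l = 0 :=
  k_lambda_zero_of_rad_nonzero_general C D ι hι2 hιmul hC2 r hC3 τ hτtr hdual Φ Ψ hΦ hΨ k hk
end

section
/- Let A be a symmetric cellular algebra and λ ∈ Λ. The R-span I^λ of the elements C^λ_{S,V} D^λ_{V,U} (for S, U ∈ M(λ) and any fixed V) is a two-sided ideal of A. -/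
/-!
The `D`-coordinates of `z` are the traces `τ (C^μ_{Y,X} z)`. With this, cellular multiplication
`a C^μ ≡ ∑ r_a C^μ` modulo cells below `μ` shows that `C^μ D^λ = 0` for `μ < λ`. Hence
`a C^λ_{S,V} D^λ_{V,U} = ∑ r_a(S', S) C^λ_{S',V} D^λ_{V,U}`. Dually, since `τ` is a trace,
`D^λ_{V,U} a ≡ ∑ r_a(U, Y) D^λ_{V,Y}` modulo `D`-cells strictly above `λ`, which `C^λ` kills
from the left, so `C^λ_{S,V} D^λ_{V,U} a = ∑ r_a(U, Y) C^λ_{S,V} D^λ_{V,Y}`.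
-/

namespace CellularAlgebra

variable {R A Λ : Type*} [CommRing R] [Ring A] [Algebra R A] {M : Λ → Type*}

variable (R) in
def lowerCells [Preorder Λ] (C : ∀ l, M l → M l → A) (l : Λ) : Submodule R A :=
  Submodule.span R {x | ∃ m, ∃ U V : M m, m < l ∧ x = C m U V}

def IsDualBasis [DecidableEq Λ] [∀ l, DecidableEq (M l)]
    (τ : A →ₗ[R] R) (C D : ∀ l, M l → M l → A) : Prop :=
  ∀ l m (S T : M l) (U V : M m),
    τ (C l S T * D m U V) =
      if (⟨l, (S, T)⟩ : (l : Λ) × (M l × M l)) = ⟨m, (V, U)⟩ then 1 else 0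

namespace IsDualBasis

variable [DecidableEq Λ] [∀ l, DecidableEq (M l)] {τ : A →ₗ[R] R}
  {C D : ∀ l, M l → M l → A}

theorem trace_mul_of_ne (hdual : IsDualBasis τ C D) {l m : Λ} (hlm : l ≠ m)
    (S T : M l) (U V : M m) : τ (C l S T * D m U V) = 0 := by
  rw [hdual l m, if_neg fun h => hlm (congrArg Sigma.fst h)]

theorem trace_mul_self (hdual : IsDualBasis τ C D) {l : Λ} (S T U V : M l) :
    τ (C l S T * D l U V) = if S = V ∧ T = U then 1 else 0 := by
  simp [hdual l l]

theorem trace_cell_mul_eq_repr (hdual : IsDualBasis τ C D)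
    (bD : Module.Basis ((l : Λ) × (M l × M l)) R A) (hbD : ∀ l S T, bD ⟨l, (S, T)⟩ = D l S T)
    (z : A) (n : Λ) (X Y : M n) : τ (C n Y X * z) = bD.repr z ⟨n, (X, Y)⟩ := by
  have h : τ ∘ₗ LinearMap.mulLeft R (C n Y X)
      = Finsupp.lapply (⟨n, (X, Y)⟩ : (l : Λ) × (M l × M l)) ∘ₗ bD.repr.toLinearMap := by
    refine bD.ext fun ⟨m, U, V⟩ => ?_
    simp only [LinearMap.comp_apply, LinearMap.mulLeft_apply, LinearEquiv.coe_coe,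
      Module.Basis.repr_self, Finsupp.lapply_apply]
    rw [hbD]
    by_cases hnm : n = m
    · subst hnm
      simp [hdual.trace_mul_self, Finsupp.single_apply, eq_comm, and_comm]
    · rw [hdual.trace_mul_of_ne hnm,
        Finsupp.single_eq_of_ne fun h => hnm (congrArg Sigma.fst h)]
  exact LinearMap.congr_fun h z

theorem trace_mul_eq_zero_of_mem_lowerCells [Preorder Λ] (hdual : IsDualBasis τ C D)
    {l n : Λ} (hln : ¬ l < n) (V U : M l) {w : A} (hw : w ∈ lowerCells R C n) :
    τ (w * D l V U) = 0 := by
  refine Submodule.span_induction ?_ (by simp) (fun x y _ _ hx hy => by simp [add_mul, hx, hy])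
    (fun c x _ hx => by simp [hx]) hw
  rintro _ ⟨m, P, Q, hmn, rfl⟩
  exact hdual.trace_mul_of_ne (by rintro rfl; exact hln hmn) P Q V U

end IsDualBasis

variable (R) in
def IsCellularMul [Preorder Λ] [∀ l, Fintype (M l)]
    (C : ∀ l, M l → M l → A) (r : A → ∀ l, M l → M l → R) : Prop :=
  ∀ (a : A) l (S T : M l), a * C l S T - ∑ S', r a l S' S • C l S' T ∈ lowerCells R C l

section

variable [Preorder Λ] [DecidableEq Λ] [∀ l, DecidableEq (M l)] [∀ l, Fintype (M l)]
  {τ : A →ₗ[R] R} {C D : ∀ l, M l → M l → A} {r : A → ∀ l, M l → M l → R}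
  {bD : Module.Basis ((l : Λ) × (M l × M l)) R A}

theorem cell_mul_dual_eq_zero_of_lt (hcell : IsCellularMul R C r) (hdual : IsDualBasis τ C D)
    (hbD : ∀ l S T, bD ⟨l, (S, T)⟩ = D l S T) {m l : Λ} (hml : m < l) (P Q : M m) (V U : M l) :
    C m P Q * D l V U = 0 := by
  refine bD.ext_elem fun ⟨n, X, Y⟩ => ?_
  rw [map_zero, Finsupp.zero_apply, ← hdual.trace_cell_mul_eq_repr bD hbD, ← mul_assoc]
  have hlow :=
    hdual.trace_mul_eq_zero_of_mem_lowerCells (lt_asymm hml) V U (hcell (C n Y X) m P Q)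
  rw [sub_mul, map_sub, sub_eq_zero, Finset.sum_mul, map_sum] at hlow
  rw [hlow]
  refine Finset.sum_eq_zero fun P' _ => ?_
  rw [smul_mul_assoc, map_smul, hdual.trace_mul_of_ne hml.ne, smul_zero]

theorem mul_dual_eq_zero_of_mem_lowerCells (hcell : IsCellularMul R C r)
    (hdual : IsDualBasis τ C D) (hbD : ∀ l S T, bD ⟨l, (S, T)⟩ = D l S T) {l : Λ} (V U : M l)
    {w : A} (hw : w ∈ lowerCells R C l) : w * D l V U = 0 := by
  have hle : lowerCells R C l ≤ LinearMap.ker (LinearMap.mulRight R (D l V U)) := by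
    refine Submodule.span_le.2 ?_
    rintro _ ⟨m, P, Q, hml, rfl⟩
    exact cell_mul_dual_eq_zero_of_lt hcell hdual hbD hml P Q V U
  exact hle hw

theorem mul_cell_mul_dual (hcell : IsCellularMul R C r) (hdual : IsDualBasis τ C D)
    (hbD : ∀ l S T, bD ⟨l, (S, T)⟩ = D l S T) (a : A) {l : Λ} (S V U : M l) :
    a * (C l S V * D l V U) = ∑ S', r a l S' S • (C l S' V * D l V U) := by
  have h := mul_dual_eq_zero_of_mem_lowerCells hcell hdual hbD V U (hcell a l S V)
  rw [sub_mul, sub_eq_zero, Finset.sum_mul] at h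
  simp_rw [← mul_assoc, h, smul_mul_assoc]

theorem repr_dual_mul_sub_eq_zero (hτ : ∀ x y, τ (x * y) = τ (y * x))
    (hcell : IsCellularMul R C r) (hdual : IsDualBasis τ C D)
    (hbD : ∀ l S T, bD ⟨l, (S, T)⟩ = D l S T) (a : A) {l : Λ} (V U : M l) {n : Λ}
    (hln : ¬ l < n) (X Y : M n) :
    bD.repr (D l V U * a - ∑ Y', r a l U Y' • D l V Y') ⟨n, (X, Y)⟩ = 0 := by
  rw [← hdual.trace_cell_mul_eq_repr bD hbD, mul_sub, map_sub, sub_eq_zero, ← mul_assoc, hτ,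
    ← mul_assoc]
  have hlow := hdual.trace_mul_eq_zero_of_mem_lowerCells hln V U (hcell a n Y X)
  rw [sub_mul, map_sub, sub_eq_zero] at hlow
  rw [hlow, Finset.sum_mul, Finset.mul_sum, map_sum, map_sum]
  simp_rw [smul_mul_assoc, mul_smul_comm, map_smul]
  by_cases hnl : n = l
  · subst hnl
    by_cases hXV : X = V <;> simp [hdual.trace_mul_self, hXV, eq_comm]
  · simp [hdual.trace_mul_of_ne hnl]

theorem cell_mul_eq_zero_of_repr_eq_zero (hcell : IsCellularMul R C r)
    (hdual : IsDualBasis τ C D) (hbD : ∀ l S T, bD ⟨l, (S, T)⟩ = D l S T) {l : Λ} {h : A}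
    (hrepr : ∀ n (X Y : M n), ¬ l < n → bD.repr h ⟨n, (X, Y)⟩ = 0) (S V : M l) :
    C l S V * h = 0 := by
  rw [← bD.linearCombination_repr h, Finsupp.linearCombination_apply, Finsupp.sum,
    Finset.mul_sum]
  refine Finset.sum_eq_zero fun ⟨n, X, Y⟩ _ => ?_
  rw [mul_smul_comm, hbD]
  by_cases hln : l < n
  · rw [cell_mul_dual_eq_zero_of_lt hcell hdual hbD hln, smul_zero]
  · rw [hrepr n X Y hln, zero_smul]

theorem cell_mul_dual_mul (hτ : ∀ x y, τ (x * y) = τ (y * x)) (hcell : IsCellularMul R C r)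
    (hdual : IsDualBasis τ C D) (hbD : ∀ l S T, bD ⟨l, (S, T)⟩ = D l S T) (a : A) {l : Λ}
    (S V U : M l) : C l S V * D l V U * a = ∑ Y, r a l U Y • (C l S V * D l V Y) := by
  have h := cell_mul_eq_zero_of_repr_eq_zero hcell hdual hbD
    (fun n X Y hln => repr_dual_mul_sub_eq_zero hτ hcell hdual hbD a V U hln X Y) S V
  rw [mul_sub, sub_eq_zero, Finset.mul_sum] at h
  simp_rw [mul_assoc, h, mul_smul_comm]

end

end CellularAlgebra

theorem span_CD_is_ideal_general
    {R A : Type*} [CommRing R] [Ring A] [Algebra R A]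
    {Λ : Type*} [PartialOrder Λ] [DecidableEq Λ]
    {M : Λ → Type*} [∀ l, Fintype (M l)] [∀ l, DecidableEq (M l)]
    (C D : ∀ l, M l → M l → A)
    (r : A → ∀ l, M l → M l → R)
    (hC3 : ∀ (a : A) l (S T : M l), a * C l S T - ∑ S', r a l S' S • C l S' T ∈
      Submodule.span R {x | ∃ m, ∃ U V : M m, m < l ∧ x = C m U V})
    (τ : A →ₗ[R] R)
    (hτtr : ∀ x y, τ (x * y) = τ (y * x))
    (bD : Module.Basis ((l : Λ) × (M l × M l)) R A)
    (hbD : ∀ l S T, bD ⟨l, (S, T)⟩ = D l S T)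
    (hdual : ∀ l m (S T : M l) (U V : M m),
      τ (C l S T * D m U V) =
        if (⟨l, (S, T)⟩ : (l : Λ) × (M l × M l)) = ⟨m, (V, U)⟩ then 1 else 0)
     :
    ∀ l, ∀ a : A, ∀ x ∈ Submodule.span R
        {x : A | ∃ S U V : M l, x = C l S V * D l V U},
      a * x ∈ Submodule.span R {x : A | ∃ S U V : M l, x = C l S V * D l V U} ∧
      x * a ∈ Submodule.span R {x : A | ∃ S U V : M l, x = C l S V * D l V U} := by
  intro l a x hx
  set I := Submodule.span R {x : A | ∃ S U V : M l, x = C l S V * D l V U}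
  have hcell : CellularAlgebra.IsCellularMul R C r := hC3
  have hdual : CellularAlgebra.IsDualBasis τ C D := hdual
  have hgen : ∀ f : A →ₗ[R] A, (∀ S U V : M l, f (C l S V * D l V U) ∈ I) → f x ∈ I :=
    fun f hf => (Submodule.map_span_le f _ I).2 (by rintro _ ⟨S, U, V, rfl⟩; exact hf S U V)
      ⟨x, hx, rfl⟩
  refine ⟨hgen (LinearMap.mulLeft R a) fun S U V => ?_,
    hgen (LinearMap.mulRight R a) fun S U V => ?_⟩
  · rw [LinearMap.mulLeft_apply, CellularAlgebra.mul_cell_mul_dual hcell hdual hbD]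
    exact Submodule.sum_mem _ fun S' _ =>
      Submodule.smul_mem _ _ (Submodule.subset_span ⟨S', U, V, rfl⟩)
  · rw [LinearMap.mulRight_apply, CellularAlgebra.cell_mul_dual_mul hτtr hcell hdual hbD]
    exact Submodule.sum_mem _ fun Y _ =>
      Submodule.smul_mem _ _ (Submodule.subset_span ⟨S, Y, V, rfl⟩)

/-- Lemma 4.1: the span of the elements `C l S V * D l V U` is a two-sided ideal of `A`. -/
theorem span_CD_is_ideal
    {R A : Type*} [CommRing R] [Ring A] [Algebra R A]
    {Λ : Type*} [PartialOrder Λ] [Fintype Λ] [DecidableEq Λ]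
    {M : Λ → Type*} [∀ l, Fintype (M l)] [∀ l, DecidableEq (M l)]
    (C D : ∀ l, M l → M l → A)
    (bC : Module.Basis ((l : Λ) × (M l × M l)) R A)
    (hbC : ∀ l S T, bC ⟨l, (S, T)⟩ = C l S T)
    (ι : A →ₗ[R] A)
    (hι2 : ∀ x, ι (ι x) = x)
    (hιmul : ∀ x y, ι (x * y) = ι y * ι x)
    (hC2 : ∀ l (S T : M l), ι (C l S T) - C l T S ∈
      Submodule.span R {x | ∃ m, ∃ U V : M m, m < l ∧ x = C m U V})
    (r : A → ∀ l, M l → M l → R)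
    (hC3 : ∀ (a : A) l (S T : M l), a * C l S T - ∑ S', r a l S' S • C l S' T ∈
      Submodule.span R {x | ∃ m, ∃ U V : M m, m < l ∧ x = C m U V})
    (τ : A →ₗ[R] R)
    (hτtr : ∀ x y, τ (x * y) = τ (y * x))
    (bD : Module.Basis ((l : Λ) × (M l × M l)) R A)
    (hbD : ∀ l S T, bD ⟨l, (S, T)⟩ = D l S T)
    (hdual : ∀ l m (S T : M l) (U V : M m),
      τ (C l S T * D m U V) =
        if (⟨l, (S, T)⟩ : (l : Λ) × (M l × M l)) = ⟨m, (V, U)⟩ then 1 else 0)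
     :
    ∀ l, ∀ a : A, ∀ x ∈ Submodule.span R
        {x : A | ∃ S U V : M l, x = C l S V * D l V U},
      a * x ∈ Submodule.span R {x : A | ∃ S U V : M l, x = C l S V * D l V U} ∧
      x * a ∈ Submodule.span R {x : A | ∃ S U V : M l, x = C l S V * D l V U} :=
  span_CD_is_ideal_general C D r hC3 τ hτtr bD hbD hdual
end
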